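/- arXiv:2508.14267 — 6 statements merged into one kernel-verified Lean document; each statement's English description precedes it below -/
import Mathlib

section
/- For the dihedral group D_{2^n} of order 2^n (n ≥ 3), the total number of subgroups is 2^n + n - 1. -/
open Pointwise

/-- The number of subgroups of a group `G`, i.e. `|L(G)|`. -/
noncomputable def numSubgroups (G : Type*) [Group G] : ℕ := Nat.card (Subgroup G)

/-- The number of conjugacy classes of subgroups of `G`, i.e. `k'(G)`:
the number of orbits of the conjugation action of `G` on its subgroup lattice. -/
noncomputable def numConjClassesSubgroups (G : Type*) [Group G] : ℕ :=
  Nat.card (Quotient (MulAction.orbitRel (ConjAct G) (Subgroup G)))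

/-- `d'(G) = k'(G) / |L(G)|`. -/
noncomputable def dprime (G : Type*) [Group G] : ℚ :=
  (numConjClassesSubgroups G : ℚ) / (numSubgroups G : ℚ)

open AddSubgroup

namespace DihedralCount

open DihedralGroup AddSubgroup

variable {m : ℕ}

/-- The subgroup of rotations `r i`, `i ∈ R`. -/
def rotSub (R : AddSubgroup (ZMod m)) : Subgroup (DihedralGroup m) where
  carrier := {x | ∃ i ∈ R, x = DihedralGroup.r i}
  one_mem' := ⟨0, R.zero_mem, rfl⟩
  mul_mem' := by
    rintro _ _ ⟨i, hi, rfl⟩ ⟨j, hj, rfl⟩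
    exact ⟨i + j, R.add_mem hi hj, rfl⟩
  inv_mem' := by
    rintro _ ⟨i, hi, rfl⟩
    exact ⟨-i, R.neg_mem hi, rfl⟩

@[simp] lemma mem_rotSub_r {R : AddSubgroup (ZMod m)} {i : ZMod m} :
    DihedralGroup.r i ∈ rotSub R ↔ i ∈ R := by
  constructor
  · rintro ⟨j, hj, hij⟩
    cases hij
    exact hj
  · exact fun h => ⟨i, h, rfl⟩

@[simp] lemma not_sr_mem_rotSub {R : AddSubgroup (ZMod m)} {j : ZMod m} :
    DihedralGroup.sr j ∉ rotSub R := by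
  rintro ⟨i, hi, h⟩
  exact absurd h (by simp)

/-- The subgroup containing rotations `r i`, `i ∈ R` and reflections `sr j`, `j ∈ a + R`. -/
def dihSub (R : AddSubgroup (ZMod m)) (a : ZMod m) : Subgroup (DihedralGroup m) where
  carrier := {x | match x with
    | DihedralGroup.r i => i ∈ R
    | DihedralGroup.sr j => j - a ∈ R}
  one_mem' := R.zero_mem
  mul_mem' := by
    rintro (i | i) (j | j) hx hy
    · exact R.add_mem hx hy
    · show j - i - a ∈ R
      have : j - i - a = (j - a) - i := by ring
      rw [this]; exact R.sub_mem hy hx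
    · show i + j - a ∈ R
      have : i + j - a = (i - a) + j := by ring
      rw [this]; exact R.add_mem hx hy
    · show j - i ∈ R
      have : j - i = (j - a) - (i - a) := by ring
      rw [this]; exact R.sub_mem hy hx
  inv_mem' := by
    rintro (i | i) hx
    · exact R.neg_mem hx
    · exact hx

@[simp] lemma mem_dihSub_r {R : AddSubgroup (ZMod m)} {a i : ZMod m} :
    DihedralGroup.r i ∈ dihSub R a ↔ i ∈ R := Iff.rfl

@[simp] lemma mem_dihSub_sr {R : AddSubgroup (ZMod m)} {a j : ZMod m} :
    DihedralGroup.sr j ∈ dihSub R a ↔ j - a ∈ R := Iff.rfl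

lemma dihSub_congr {R : AddSubgroup (ZMod m)} {a b : ZMod m} (h : -a + b ∈ R) :
    dihSub R a = dihSub R b := by
  have h' : b - a ∈ R := by
    have hh : b - a = -a + b := by ring
    rw [hh]; exact h
  ext x
  rcases x with i | j
  · rfl
  · simp only [mem_dihSub_sr]
    constructor
    · intro hj
      have hh : j - b = (j - a) - (b - a) := by ring
      rw [hh]
      exact R.sub_mem hj h'
    · intro hj
      have hh : j - a = (j - b) + (b - a) := by ring
      rw [hh]
      exact R.add_mem hj h'

/-- The classification map. -/
noncomputable def toSub :
    (AddSubgroup (ZMod m)) ⊕ (Σ R : AddSubgroup (ZMod m), ZMod m ⧸ R) →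
      Subgroup (DihedralGroup m)
  | Sum.inl R => rotSub R
  | Sum.inr ⟨R, c⟩ => Quotient.liftOn' c (dihSub R)
      (fun a b hab => dihSub_congr ((QuotientAddGroup.leftRel_apply).mp hab))

lemma toSub_inr_mk (R : AddSubgroup (ZMod m)) (a : ZMod m) :
    toSub (Sum.inr ⟨R, QuotientAddGroup.mk a⟩) = dihSub R a := rfl

lemma toSub_bijective : Function.Bijective (toSub (m := m)) := by
  constructor
  · rintro (R | ⟨R, c⟩) (R' | ⟨R', c'⟩) h
    · -- inl inl
      congr 1
      ext i
      rw [← mem_rotSub_r (R := R), ← mem_rotSub_r (R := R'), show rotSub R = rotSub R' from h]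
    · -- inl inr
      exfalso
      induction c' using Quotient.inductionOn' with
      | h a =>
        have : DihedralGroup.sr a ∈ toSub (m := m) (Sum.inl R) := by
          rw [h]
          show DihedralGroup.sr a ∈ dihSub R' a
          simpa using R'.zero_mem
        exact not_sr_mem_rotSub this
    · -- inr inl
      exfalso
      induction c using Quotient.inductionOn' with
      | h a =>
        have : DihedralGroup.sr a ∈ toSub (m := m) (Sum.inr ⟨R, Quotient.mk'' a⟩) := by
          show DihedralGroup.sr a ∈ dihSub R a
          simpa using R.zero_mem
        rw [h] at this
        exact not_sr_mem_rotSub this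
    · -- inr inr
      induction c using Quotient.inductionOn' with
      | h a =>
      induction c' using Quotient.inductionOn' with
      | h b =>
        have h' : dihSub R a = dihSub R' b := h
        have hR : R = R' := by
          ext i
          rw [← mem_dihSub_r (R := R) (a := a), ← mem_dihSub_r (R := R') (a := b), h']
        subst hR
        have hab : a - b ∈ R := by
          have : DihedralGroup.sr a ∈ dihSub R b := by
            rw [← h']; simpa using R.zero_mem
          simpa using this
        have : (Quotient.mk'' a : ZMod m ⧸ R) = Quotient.mk'' b := by
          apply Quotient.sound'
          rw [QuotientAddGroup.leftRel_apply]
          have : -a + b = -(a - b) := by ring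
          rw [this]
          exact R.neg_mem hab
        rw [this]
  · intro H
    classical
    let R : AddSubgroup (ZMod m) :=
      { carrier := {i | DihedralGroup.r i ∈ H}
        zero_mem' := by
          show DihedralGroup.r 0 ∈ H
          rw [← DihedralGroup.one_def]
          exact H.one_mem
        add_mem' := by
          intro i j hi hj
          show DihedralGroup.r (i + j) ∈ H
          rw [← DihedralGroup.r_mul_r]
          exact H.mul_mem hi hj
        neg_mem' := by
          intro i hi
          show DihedralGroup.r (-i) ∈ H
          exact H.inv_mem hi }
    by_cases hs : ∃ a, DihedralGroup.sr a ∈ H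
    · obtain ⟨a, ha⟩ := hs
      refine ⟨Sum.inr ⟨R, QuotientAddGroup.mk a⟩, ?_⟩
      rw [toSub_inr_mk]
      ext x
      rcases x with i | j
      · rfl
      · simp only [mem_dihSub_sr]
        constructor
        · intro hj
          have h1 : DihedralGroup.r (a - j) ∈ H := by
            show a - j ∈ R
            have : a - j = -(j - a) := by ring
            rw [this]
            exact R.neg_mem hj
          have := H.mul_mem h1 ha
          simpa using this
        · intro hj
          have : DihedralGroup.sr j * DihedralGroup.sr a ∈ H := H.mul_mem hj ha
          rw [DihedralGroup.sr_mul_sr] at this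
          have h1 : a - j ∈ R := this
          have h2 : j - a = -(a - j) := by ring
          rw [h2]
          exact R.neg_mem h1
    · refine ⟨Sum.inl R, ?_⟩
      show rotSub R = H
      ext x
      rcases x with i | j
      · simp only [mem_rotSub_r]; rfl
      · simp only [not_sr_mem_rotSub, false_iff]
        exact fun h => hs ⟨j, h⟩

lemma card_subgroup_eq [NeZero m] :
    Nat.card (Subgroup (DihedralGroup m)) =
      Nat.card (AddSubgroup (ZMod m)) +
        Nat.card (Σ R : AddSubgroup (ZMod m), ZMod m ⧸ R) := by
  rw [← Nat.card_congr (Equiv.ofBijective _ toSub_bijective), Nat.card_sum]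

end DihedralCount

section Cyclic

variable {m : ℕ}

lemma eq_zmultiples [NeZero m] (H : AddSubgroup (ZMod m)) :
    ∃ c : ZMod m, H = AddSubgroup.zmultiples c := by
  obtain ⟨g, hg⟩ := IsAddCyclic.exists_generator (α := H)
  refine ⟨(g : ZMod m), le_antisymm ?_ ?_⟩
  · intro x hx
    obtain ⟨k, hk⟩ := hg ⟨x, hx⟩
    refine ⟨k, ?_⟩
    have := congrArg (Subtype.val) hk
    simpa using this
  · rw [AddSubgroup.zmultiples_le]
    exact g.2

lemma zmultiples_natCast_gcd (v : ℕ) :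
    AddSubgroup.zmultiples ((v : ZMod m)) = AddSubgroup.zmultiples ((Nat.gcd m v : ZMod m)) := by
  apply le_antisymm <;> rw [AddSubgroup.zmultiples_le]
  · obtain ⟨c, hc⟩ : (Nat.gcd m v : ℕ) ∣ v := Nat.gcd_dvd_right m v
    refine ⟨(c : ℤ), ?_⟩
    push_cast
    rw [zsmul_eq_mul]
    push_cast
    rw [← Nat.cast_mul, mul_comm, ← hc]
  · refine ⟨Nat.gcdB m v, ?_⟩
    show (Nat.gcdB m v) • ((v : ZMod m)) = _
    rw [zsmul_eq_mul]
    have h := Nat.gcd_eq_gcd_ab m v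
    have h2 : ((Nat.gcd m v : ℤ) : ZMod m) = ((m : ℤ) : ZMod m) * (Nat.gcdA m v : ZMod m)
        + ((v : ℤ) : ZMod m) * (Nat.gcdB m v : ZMod m) := by
      rw [← Int.cast_mul, ← Int.cast_mul, ← Int.cast_add, ← h]
    push_cast at h2 ⊢
    rw [h2]
    simp [ZMod.natCast_self]
    ring

end Cyclic

section Pow2

noncomputable def gsub (k : ℕ) (i : Fin (k+1)) : AddSubgroup (ZMod (2^k)) :=
  AddSubgroup.zmultiples ((2^(i:ℕ) : ℕ) : ZMod (2^k))

lemma card_gsub (k : ℕ) (i : Fin (k+1)) : Nat.card (gsub k i) = 2^(k - (i:ℕ)) := by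
  haveI : NeZero (2^k) := ⟨pow_ne_zero _ two_ne_zero⟩
  rw [gsub, Nat.card_zmultiples, ZMod.addOrderOf_coe _ (NeZero.ne _)]
  rw [Nat.gcd_eq_right (pow_dvd_pow 2 (Nat.le_of_lt_succ i.isLt))]
  rw [Nat.pow_div (Nat.le_of_lt_succ i.isLt) two_pos]

lemma index_gsub (k : ℕ) (i : Fin (k+1)) : (gsub k i).index = 2^(i:ℕ) := by
  haveI : NeZero (2^k) := ⟨pow_ne_zero _ two_ne_zero⟩
  have h := AddSubgroup.card_mul_index (gsub k i)
  rw [card_gsub, Nat.card_zmod] at h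
  have hk : 2^(k - (i:ℕ)) * 2^(i:ℕ) = 2^k := by
    rw [← pow_add]
    congr 1
    omega
  exact Nat.eq_of_mul_eq_mul_left (Nat.pow_pos two_pos) (h.trans hk.symm)

lemma gsub_bijective (k : ℕ) : Function.Bijective (gsub k) := by
  haveI : NeZero (2^k) := ⟨pow_ne_zero _ two_ne_zero⟩
  constructor
  · intro i j h
    have := congrArg Nat.card (congrArg (fun H => H.carrier) h)
    have hc : Nat.card (gsub k i) = Nat.card (gsub k j) := by rw [h]
    rw [card_gsub, card_gsub] at hc
    have := Nat.pow_right_injective (le_refl 2) hc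
    have hi := Nat.le_of_lt_succ i.isLt
    have hj := Nat.le_of_lt_succ j.isLt
    ext
    omega
  · intro H
    obtain ⟨c, rfl⟩ := eq_zmultiples H
    have hc : c = ((c.val : ℕ) : ZMod (2^k)) := (ZMod.natCast_zmod_val c).symm
    rw [hc, zmultiples_natCast_gcd]
    obtain ⟨i, hik, hi⟩ := (Nat.dvd_prime_pow Nat.prime_two).mp (Nat.gcd_dvd_left (2^k) c.val)
    exact ⟨⟨i, Nat.lt_succ_of_le hik⟩, by rw [gsub, hi]⟩

lemma card_addSubgroup_pow2 (k : ℕ) : Nat.card (AddSubgroup (ZMod (2^k))) = k + 1 := by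
  rw [← Nat.card_congr (Equiv.ofBijective _ (gsub_bijective k))]
  simp

lemma sum_range_two_pow (t : ℕ) : ∑ i ∈ Finset.range t, 2^i = 2^t - 1 := by
  induction t with
  | zero => simp
  | succ t ih =>
    rw [Finset.sum_range_succ, ih, pow_succ]
    have : 1 ≤ 2^t := Nat.one_le_two_pow
    omega

lemma card_sigma_pow2 (k : ℕ) :
    Nat.card (Σ R : AddSubgroup (ZMod (2^k)), ZMod (2^k) ⧸ R) = 2^(k+1) - 1 := by
  haveI : NeZero (2^k) := ⟨pow_ne_zero _ two_ne_zero⟩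
  classical
  have e : (Σ R : AddSubgroup (ZMod (2^k)), ZMod (2^k) ⧸ R) ≃
      (Σ i : Fin (k+1), ZMod (2^k) ⧸ gsub k i) :=
    (Equiv.sigmaCongrLeft (Equiv.ofBijective _ (gsub_bijective k))).symm
  rw [Nat.card_congr e]
  haveI : ∀ i : Fin (k+1), Fintype (ZMod (2^k) ⧸ gsub k i) := fun i => Fintype.ofFinite _
  rw [Nat.card_eq_fintype_card, Fintype.card_sigma]
  have heq : ∀ i : Fin (k+1), Fintype.card (ZMod (2^k) ⧸ gsub k i) = 2^(i:ℕ) := fun i => by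
    rw [← Nat.card_eq_fintype_card]
    exact index_gsub k i
  rw [Finset.sum_congr rfl (fun i _ => heq i)]
  rw [Fin.sum_univ_eq_sum_range (fun i => 2^i) (k+1), sum_range_two_pow]

end Pow2

/-- For `n ≥ 3`, the dihedral group `D_{2^n}` of order `2^n` has exactly
`2^n + n - 1` subgroups. -/
theorem dihedral_numSubgroups (n : ℕ) (hn : 3 ≤ n) :
    numSubgroups (DihedralGroup (2 ^ (n - 1))) = 2 ^ n + n - 1 := by
  haveI : NeZero (2 ^ (n - 1)) := ⟨pow_ne_zero _ two_ne_zero⟩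
  rw [numSubgroups, DihedralCount.card_subgroup_eq, card_addSubgroup_pow2, card_sigma_pow2]
  have h1 : n - 1 + 1 = n := by omega
  rw [h1]
  have h2 : 1 ≤ 2 ^ n := Nat.one_le_two_pow
  omega
end

section
/- For the dihedral group D_{2^n} of order 2^n (n ≥ 3), the number of conjugacy classes of subgroups is 3n - 1. -/
open Pointwise

namespace DihCount

open DihedralGroup AddSubgroup

variable {m : ℕ}
open Pointwise




@[simp] lemma r_inv (i : ZMod m) : (DihedralGroup.r i)⁻¹ = DihedralGroup.r (-i) := rfl
@[simp] lemma sr_inv (i : ZMod m) : (DihedralGroup.sr i)⁻¹ = DihedralGroup.sr i := rfl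

/-- The rotations contained in a subgroup of the dihedral group. -/
def rotSet (H : Subgroup (DihedralGroup m)) : AddSubgroup (ZMod m) where
  carrier := {i | DihedralGroup.r i ∈ H}
  zero_mem' := by show DihedralGroup.r 0 ∈ H; exact H.one_mem
  add_mem' := fun {a b} ha hb => by simpa using H.mul_mem ha hb
  neg_mem' := fun {a} ha => by simpa using H.inv_mem ha

@[simp] lemma mem_rotSet {H : Subgroup (DihedralGroup m)} {i : ZMod m} :
    i ∈ rotSet H ↔ DihedralGroup.r i ∈ H := Iff.rfl

lemma r_mem_conj_r (j i : ZMod m) (H : Subgroup (DihedralGroup m)) :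
    DihedralGroup.r i ∈ ConjAct.toConjAct (DihedralGroup.r j) • H ↔ DihedralGroup.r i ∈ H := by
  rw [Subgroup.mem_pointwise_smul_iff_inv_smul_mem, ConjAct.smul_def]; simp

lemma sr_mem_conj_r (j i : ZMod m) (H : Subgroup (DihedralGroup m)) :
    DihedralGroup.sr i ∈ ConjAct.toConjAct (DihedralGroup.r j) • H ↔
      DihedralGroup.sr (i + 2 * j) ∈ H := by
  rw [Subgroup.mem_pointwise_smul_iff_inv_smul_mem, ConjAct.smul_def]
  simp [two_mul, add_assoc]

lemma r_mem_conj_sr (j i : ZMod m) (H : Subgroup (DihedralGroup m)) :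
    DihedralGroup.r i ∈ ConjAct.toConjAct (DihedralGroup.sr j) • H ↔
      DihedralGroup.r (-i) ∈ H := by
  rw [Subgroup.mem_pointwise_smul_iff_inv_smul_mem, ConjAct.smul_def]; simp

lemma sr_mem_conj_sr (j i : ZMod m) (H : Subgroup (DihedralGroup m)) :
    DihedralGroup.sr i ∈ ConjAct.toConjAct (DihedralGroup.sr j) • H ↔
      DihedralGroup.sr (2 * j - i) ∈ H := by
  rw [Subgroup.mem_pointwise_smul_iff_inv_smul_mem, ConjAct.smul_def]
  have h : j - (i - j) = 2 * j - i := by ring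
  simp [h]

/-- Whether the subgroup contains a reflection. -/
def HasRefl (H : Subgroup (DihedralGroup m)) : Prop := ∃ i, DihedralGroup.sr i ∈ H

/-- Whether the subgroup contains an "even" reflection. -/
def HasEvenRefl (H : Subgroup (DihedralGroup m)) : Prop :=
  ∃ i, DihedralGroup.sr (2 * i) ∈ H

open Classical in
/-- A conjugation invariant of subgroups of the dihedral group. -/
noncomputable def fInv (H : Subgroup (DihedralGroup m)) : ℕ × ℕ :=
  (Nat.card (rotSet H), if HasRefl H then (if HasEvenRefl H then 1 else 2) else 0)

lemma rotSet_conj (c : ConjAct (DihedralGroup m)) (H : Subgroup (DihedralGroup m)) :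
    rotSet (c • H) = rotSet H := by
  obtain ⟨g, rfl⟩ : ∃ g, ConjAct.toConjAct g = c := ⟨ConjAct.ofConjAct c, ConjAct.toConjAct_ofConjAct c⟩
  obtain (j | j) := g
  case r =>
    ext i
    simpa using r_mem_conj_r j i H
  case sr =>
    ext i
    simp only [mem_rotSet]
    rw [r_mem_conj_sr]
    constructor
    · intro h; simpa using H.inv_mem h
    · intro h; simpa using H.inv_mem h

lemma hasRefl_conj (c : ConjAct (DihedralGroup m)) (H : Subgroup (DihedralGroup m)) :
    HasRefl (c • H) ↔ HasRefl H := by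
  obtain ⟨g, rfl⟩ : ∃ g, ConjAct.toConjAct g = c := ⟨ConjAct.ofConjAct c, ConjAct.toConjAct_ofConjAct c⟩
  obtain (j | j) := g
  case r =>
    constructor
    · rintro ⟨i, hi⟩; exact ⟨i + 2 * j, (sr_mem_conj_r j i H).mp hi⟩
    · rintro ⟨i, hi⟩
      exact ⟨i - 2 * j, by rw [sr_mem_conj_r]; simpa using hi⟩
  case sr =>
    constructor
    · rintro ⟨i, hi⟩; exact ⟨2 * j - i, (sr_mem_conj_sr j i H).mp hi⟩
    · rintro ⟨i, hi⟩
      exact ⟨2 * j - i, by rw [sr_mem_conj_sr]; simpa using hi⟩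

lemma hasEvenRefl_conj (c : ConjAct (DihedralGroup m)) (H : Subgroup (DihedralGroup m)) :
    HasEvenRefl (c • H) ↔ HasEvenRefl H := by
  obtain ⟨g, rfl⟩ : ∃ g, ConjAct.toConjAct g = c := ⟨ConjAct.ofConjAct c, ConjAct.toConjAct_ofConjAct c⟩
  obtain (j | j) := g
  case r =>
    constructor
    · rintro ⟨i, hi⟩
      exact ⟨i + j, by rw [sr_mem_conj_r j (2*i) H] at hi; convert hi using 2; ring⟩
    · rintro ⟨i, hi⟩
      refine ⟨i - j, ?_⟩
      rw [sr_mem_conj_r]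
      convert hi using 2; ring
  case sr =>
    constructor
    · rintro ⟨i, hi⟩
      rw [sr_mem_conj_sr] at hi
      exact ⟨j - i, by convert hi using 2; ring⟩
    · rintro ⟨i, hi⟩
      refine ⟨j - i, ?_⟩
      rw [sr_mem_conj_sr]
      convert hi using 2; ring

lemma fInv_conj (c : ConjAct (DihedralGroup m)) (H : Subgroup (DihedralGroup m)) :
    fInv (c • H) = fInv H := by
  classical
  have : (if HasRefl (c • H) then (if HasEvenRefl (c • H) then 1 else 2) else 0) =
      (if HasRefl H then (if HasEvenRefl H then 1 else 2) else 0 : ℕ) := by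
    split_ifs with h1 h2 h3 h4 <;> simp_all [hasRefl_conj, hasEvenRefl_conj]
  simp only [fInv, rotSet_conj]
  congr 1

/-- Lift of an additive subgroup of `ZMod m` to a rotation subgroup. -/
def rotLift (A : AddSubgroup (ZMod m)) : Subgroup (DihedralGroup m) where
  carrier := {x | ∃ i ∈ A, x = DihedralGroup.r i}
  one_mem' := ⟨0, A.zero_mem, rfl⟩
  mul_mem' := by
    rintro _ _ ⟨i, hi, rfl⟩ ⟨j, hj, rfl⟩
    exact ⟨i + j, A.add_mem hi hj, rfl⟩
  inv_mem' := by
    rintro _ ⟨i, hi, rfl⟩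
    exact ⟨-i, A.neg_mem hi, rfl⟩

@[simp] lemma r_mem_rotLift {A : AddSubgroup (ZMod m)} {i : ZMod m} :
    DihedralGroup.r i ∈ rotLift A ↔ i ∈ A := by
  constructor
  · rintro ⟨j, hj, h⟩
    obtain rfl : i = j := by simpa using h
    exact hj
  · intro h; exact ⟨i, h, rfl⟩

@[simp] lemma sr_not_mem_rotLift {A : AddSubgroup (ZMod m)} {i : ZMod m} :
    DihedralGroup.sr i ∉ rotLift A := by
  rintro ⟨j, hj, h⟩
  simp at h

/-- The subgroup generated by a rotation subgroup and the reflection `sr a`. -/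
def dihLift (A : AddSubgroup (ZMod m)) (a : ZMod m) : Subgroup (DihedralGroup m) where
  carrier := {x | (∃ i ∈ A, x = DihedralGroup.r i) ∨ ∃ i ∈ A, x = DihedralGroup.sr (a + i)}
  one_mem' := Or.inl ⟨0, A.zero_mem, rfl⟩
  mul_mem' := by
    rintro _ _ (⟨i, hi, rfl⟩ | ⟨i, hi, rfl⟩) (⟨j, hj, rfl⟩ | ⟨j, hj, rfl⟩)
    · exact Or.inl ⟨i + j, A.add_mem hi hj, rfl⟩
    · exact Or.inr ⟨j - i, A.sub_mem hj hi, by simp; try ring⟩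
    · exact Or.inr ⟨i + j, A.add_mem hi hj, by simp [add_assoc]⟩
    · exact Or.inl ⟨j - i, A.sub_mem hj hi, by simp; try ring⟩
  inv_mem' := by
    rintro _ (⟨i, hi, rfl⟩ | ⟨i, hi, rfl⟩)
    · exact Or.inl ⟨-i, A.neg_mem hi, rfl⟩
    · exact Or.inr ⟨i, hi, rfl⟩

@[simp] lemma r_mem_dihLift {A : AddSubgroup (ZMod m)} {a i : ZMod m} :
    DihedralGroup.r i ∈ dihLift A a ↔ i ∈ A := by
  constructor
  · rintro (⟨j, hj, h⟩ | ⟨j, hj, h⟩)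
    · obtain rfl : i = j := by simpa using h
      exact hj
    · simp at h
  · intro h; exact Or.inl ⟨i, h, rfl⟩

@[simp] lemma sr_mem_dihLift {A : AddSubgroup (ZMod m)} {a i : ZMod m} :
    DihedralGroup.sr i ∈ dihLift A a ↔ i - a ∈ A := by
  constructor
  · rintro (⟨j, hj, h⟩ | ⟨j, hj, h⟩)
    · simp at h
    · obtain rfl : i = a + j := by simpa using h
      simpa using hj
  · intro h; exact Or.inr ⟨i - a, h, by ring_nf⟩

/-- Unique subgroup of each order in `ZMod m`. -/
lemma addSubgroup_eq_of_card_eq [NeZero m] {A B : AddSubgroup (ZMod m)}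
    (h : Nat.card A = Nat.card B) : A = B := by
  have hm : m ≠ 0 := NeZero.ne m
  set c : ℕ := Nat.card A with hc
  have hcpos : 0 < c := Nat.card_pos
  have hdvd : c ∣ m := by
    simpa [Nat.card_zmod] using AddSubgroup.card_addSubgroup_dvd_card A
  -- the kernel of multiplication by `c`
  set φ : ZMod m →+ ZMod m := AddMonoidHom.mulLeft (c : ZMod m) with hφ
  have hrange : φ.range = AddSubgroup.zmultiples ((c : ℕ) : ZMod m) := by
    ext y
    simp only [AddMonoidHom.mem_range, AddSubgroup.mem_zmultiples_iff]
    constructor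
    · rintro ⟨x, rfl⟩
      exact ⟨(x.val : ℤ), by push_cast [hφ]; simp [AddMonoidHom.mulLeft, ZMod.natCast_val,
        ZMod.cast_id, zsmul_eq_mul]; ring⟩
    · rintro ⟨z, rfl⟩
      exact ⟨(z : ZMod m), by simp [hφ, AddMonoidHom.mulLeft, zsmul_eq_mul]; ring⟩
  have hcard_range : Nat.card φ.range = m / c := by
    rw [hrange, Nat.card_zmultiples, ZMod.addOrderOf_coe c hm,
      Nat.gcd_eq_right hdvd]
  have hker_card : Nat.card φ.ker = c := by
    have h1 : Nat.card (ZMod m) =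
        Nat.card (ZMod m ⧸ φ.ker) * Nat.card φ.ker :=
      AddSubgroup.card_eq_card_quotient_mul_card_addSubgroup φ.ker
    have h2 : Nat.card (ZMod m ⧸ φ.ker) = Nat.card φ.range :=
      Nat.card_congr (QuotientAddGroup.quotientKerEquivRange φ).toEquiv
    rw [Nat.card_zmod, h2, hcard_range] at h1
    have hmc : 0 < m / c := Nat.div_pos (Nat.le_of_dvd (Nat.pos_of_ne_zero hm) hdvd) hcpos
    have h3 : m / c * c = m := Nat.div_mul_cancel hdvd
    exact Nat.eq_of_mul_eq_mul_left hmc (h1.symm.trans h3.symm)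
  have hle : ∀ (C : AddSubgroup (ZMod m)), Nat.card C = c → C = φ.ker := by
    intro C hC
    have hsub : C ≤ φ.ker := by
      intro x hx
      have h0 : (Nat.card C) • (⟨x, hx⟩ : C) = 0 := card_nsmul_eq_zero'
      have hx0 : (Nat.card C) • x = 0 := by
        have h1 := congrArg (Subtype.val) h0
        rwa [AddSubmonoidClass.coe_nsmul] at h1
      rw [nsmul_eq_mul, hC] at hx0
      simp only [AddMonoidHom.mem_ker, hφ]
      show (c : ZMod m) * x = 0
      exact hx0
    exact AddSubgroup.eq_of_le_of_card_ge hsub (by rw [hker_card, hC])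
  rw [hle A rfl, hle B h.symm]

/-- `x` is even in `ZMod m`. -/
def Ev (x : ZMod m) : Prop := ∃ y, x = 2 * y

lemma ev_iff [NeZero m] (hm : 2 ∣ m) {x : ZMod m} : Ev x ↔ 2 ∣ x.val := by
  constructor
  · rintro ⟨y, rfl⟩
    rw [two_mul, ZMod.val_add]
    exact (Nat.dvd_mod_iff hm).mpr ⟨y.val, by ring⟩
  · rintro ⟨t, ht⟩
    refine ⟨(t : ZMod m), ?_⟩
    have : ((x.val : ℕ) : ZMod m) = x := by simp [ZMod.natCast_val, ZMod.cast_id]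
    rw [← this, ht]
    push_cast
    ring

lemma not_ev [NeZero m] (hm : 2 ∣ m) {x : ZMod m} (h : ¬ Ev x) : ∃ y, x = 2 * y + 1 := by
  rw [ev_iff hm] at h
  obtain ⟨t, ht⟩ : ∃ t, x.val = 2 * t + 1 := ⟨x.val / 2, by omega⟩
  refine ⟨(t : ZMod m), ?_⟩
  have : ((x.val : ℕ) : ZMod m) = x := by simp [ZMod.natCast_val, ZMod.cast_id]
  rw [← this, ht]
  push_cast
  ring

lemma ev_of_mem_zmultiples {d x : ZMod m} (hd : Ev d) (hx : x ∈ zmultiples d) : Ev x := by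
  obtain ⟨e, rfl⟩ := hd
  obtain ⟨z, rfl⟩ := mem_zmultiples_iff.mp hx
  exact ⟨z • e, by rw [zsmul_eq_mul, zsmul_eq_mul]; ring⟩

lemma card_zmultiples_pow (n k : ℕ) (hk : k ≤ n - 1) (hn : 1 ≤ n) :
    Nat.card (zmultiples ((2 ^ (n - 1 - k) : ℕ) : ZMod (2 ^ (n - 1)))) = 2 ^ k := by
  have h0 : (2:ℕ) ^ (n-1) ≠ 0 := by positivity
  rw [Nat.card_zmultiples, ZMod.addOrderOf_coe _ h0,
    Nat.gcd_eq_right (pow_dvd_pow 2 (by omega)), Nat.pow_div (by omega) (by norm_num)]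
  congr 1
  omega

@[simp] lemma rotSet_rotLift (A : AddSubgroup (ZMod m)) : rotSet (rotLift A) = A := by
  ext i; simp

@[simp] lemma rotSet_dihLift (A : AddSubgroup (ZMod m)) (a : ZMod m) :
    rotSet (dihLift A a) = A := by
  ext i; simp

@[simp] lemma rotSet_top : rotSet (⊤ : Subgroup (DihedralGroup m)) = ⊤ := by
  ext i; simp

lemma eq_rotLift (H : Subgroup (DihedralGroup m)) (h : ¬ HasRefl H) :
    H = rotLift (rotSet H) := by
  ext x
  obtain (i | i) := x
  · simp
  · simp only [sr_not_mem_rotLift, iff_false]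
    exact fun hx => h ⟨i, hx⟩

lemma eq_dihLift (H : Subgroup (DihedralGroup m)) (a : ZMod m)
    (ha : DihedralGroup.sr a ∈ H) : H = dihLift (rotSet H) a := by
  ext x
  obtain (i | i) := x
  · simp
  · simp only [sr_mem_dihLift, mem_rotSet]
    constructor
    · intro hi
      have h1 := H.inv_mem (H.mul_mem hi (H.inv_mem ha))
      simpa [neg_sub] using h1
    · intro hi
      have h1 := H.mul_mem ha hi
      have h2 : DihedralGroup.sr a * DihedralGroup.r (i - a) = DihedralGroup.sr i := by
        simp
      rwa [h2] at h1

lemma dihLift_top (a : ZMod m) : dihLift (⊤ : AddSubgroup (ZMod m)) a = ⊤ := by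
  ext x
  obtain (i | i) := x <;> simp

lemma conj_dihLift (A : AddSubgroup (ZMod m)) (a j : ZMod m) :
    ConjAct.toConjAct (DihedralGroup.r j) • dihLift A a = dihLift A (a - 2 * j) := by
  ext x
  obtain (i | i) := x
  · rw [r_mem_conj_r]; simp
  · rw [sr_mem_conj_r]
    simp only [sr_mem_dihLift]
    constructor
    · intro h; convert h using 1; ring
    · intro h; convert h using 1; ring

/-! ### Representatives of the conjugacy classes -/

/-- Index type for the conjugacy classes of subgroups. -/
abbrev Idx (n : ℕ) := Fin n ⊕ (Fin (n - 1) × Bool) ⊕ Unit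

/-- Representatives of the conjugacy classes of subgroups of `DihedralGroup (2^(n-1))`. -/
def FF (n : ℕ) : Idx n → Subgroup (DihedralGroup (2 ^ (n - 1)))
  | .inl k => rotLift (zmultiples ((2 ^ (n - 1 - (k : ℕ)) : ℕ) : ZMod (2 ^ (n - 1))))
  | .inr (.inl (k, b)) =>
      dihLift (zmultiples ((2 ^ (n - 1 - (k : ℕ)) : ℕ) : ZMod (2 ^ (n - 1))))
        (if b then 1 else 0)
  | .inr (.inr _) => ⊤

variable {n : ℕ}

lemma ev_gen (hn : 3 ≤ n) {k : ℕ} (hk : k ≤ n - 2) :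
    Ev ((2 ^ (n - 1 - k) : ℕ) : ZMod (2 ^ (n - 1))) := by
  refine ⟨((2 ^ (n - 2 - k) : ℕ) : ZMod (2 ^ (n - 1))), ?_⟩
  have h : (2 ^ (n - 1 - k) : ℕ) = 2 * 2 ^ (n - 2 - k) := by
    rw [← pow_succ']
    congr 1
    omega
  rw [h]
  push_cast
  ring

lemma not_ev_one (hn : 3 ≤ n) : ¬ Ev (1 : ZMod (2 ^ (n - 1))) := by
  haveI : NeZero ((2:ℕ) ^ (n - 1)) := ⟨by positivity⟩
  have h2 : 2 ∣ 2 ^ (n - 1) := dvd_pow_self 2 (by omega)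
  haveI : Fact (1 < 2 ^ (n - 1)) := ⟨by
    have : (2:ℕ) ^ 2 ≤ 2 ^ (n - 1) := Nat.pow_le_pow_right (by norm_num) (by omega)
    omega⟩
  rw [ev_iff h2, ZMod.val_one]
  omega

lemma fInv_FF_inl (hn : 3 ≤ n) (k : Fin n) :
    fInv (FF n (.inl k)) = (2 ^ (k : ℕ), 0) := by
  have h1 : Nat.card (rotSet (FF n (.inl k))) = 2 ^ (k : ℕ) := by
    rw [FF, rotSet_rotLift]
    exact card_zmultiples_pow n k (by omega) (by omega)
  have h2 : ¬ HasRefl (FF n (.inl k)) := by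
    rintro ⟨i, hi⟩
    rw [FF] at hi
    exact sr_not_mem_rotLift hi
  unfold fInv
  rw [if_neg h2, h1]

lemma fInv_FF_inr (hn : 3 ≤ n) (k : Fin (n - 1)) (b : Bool) :
    fInv (FF n (.inr (.inl (k, b)))) = (2 ^ (k : ℕ), if b then 2 else 1) := by
  have h1 : Nat.card (rotSet (FF n (.inr (.inl (k, b))))) = 2 ^ (k : ℕ) := by
    rw [FF, rotSet_dihLift]
    exact card_zmultiples_pow n k (by omega) (by omega)
  have hr : HasRefl (FF n (.inr (.inl (k, b)))) := by
    refine ⟨if b then 1 else 0, ?_⟩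
    rw [FF, sr_mem_dihLift]
    simpa using (zmultiples ((2 ^ (n - 1 - (k : ℕ)) : ℕ) : ZMod (2 ^ (n - 1)))).zero_mem
  cases b
  · have he : HasEvenRefl (FF n (.inr (.inl (k, false)))) := by
      refine ⟨0, ?_⟩
      rw [FF, sr_mem_dihLift]
      simpa using (zmultiples ((2 ^ (n - 1 - (k : ℕ)) : ℕ) : ZMod (2 ^ (n - 1)))).zero_mem
    unfold fInv
    rw [if_pos hr, if_pos he, h1]
    norm_num
  · have he : ¬ HasEvenRefl (FF n (.inr (.inl (k, true)))) := by
      rintro ⟨t, ht⟩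
      rw [FF, sr_mem_dihLift] at ht
      have hev : Ev ((2 * t - 1 : ZMod (2 ^ (n - 1)))) :=
        ev_of_mem_zmultiples (ev_gen hn (k := (k : ℕ)) (by have := k.isLt; omega)) (by simpa using ht)
      obtain ⟨y, hy⟩ := hev
      apply not_ev_one hn
      exact ⟨t - y, by rw [mul_sub, ← hy]; ring⟩
    unfold fInv
    rw [if_pos hr, if_neg he, h1]
    norm_num

lemma fInv_FF_top (hn : 3 ≤ n) :
    fInv (FF n (.inr (.inr ()))) = (2 ^ (n - 1), 1) := by
  haveI : NeZero ((2:ℕ) ^ (n - 1)) := ⟨by positivity⟩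
  have h1 : Nat.card (rotSet (FF n (.inr (.inr ())))) = 2 ^ (n - 1) := by
    rw [FF, rotSet_top, AddSubgroup.card_top, Nat.card_zmod]
  have hr : HasRefl (FF n (.inr (.inr ()))) := ⟨0, by rw [FF]; trivial⟩
  have he : HasEvenRefl (FF n (.inr (.inr ()))) := ⟨0, by rw [FF]; trivial⟩
  unfold fInv
  rw [if_pos hr, if_pos he, h1]

/-- Every subgroup is conjugate to one of the representatives. -/
lemma exists_conj (hn : 3 ≤ n) (H : Subgroup (DihedralGroup (2 ^ (n - 1)))) :
    ∃ t : Idx n, ∃ g : ConjAct (DihedralGroup (2 ^ (n - 1))), g • FF n t = H := by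
  haveI : NeZero ((2:ℕ) ^ (n - 1)) := ⟨by positivity⟩
  have hm2 : (2:ℕ) ∣ 2 ^ (n - 1) := dvd_pow_self 2 (by omega)
  have hcd : Nat.card (rotSet H) ∣ 2 ^ (n - 1) := by
    simpa [Nat.card_zmod] using card_addSubgroup_dvd_card (rotSet H)
  obtain ⟨k, hk, hck⟩ := (Nat.dvd_prime_pow Nat.prime_two).mp hcd
  have hA : rotSet H = zmultiples ((2 ^ (n - 1 - k) : ℕ) : ZMod (2 ^ (n - 1))) :=
    addSubgroup_eq_of_card_eq (by rw [hck, card_zmultiples_pow n k hk (by omega)])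
  by_cases hr : HasRefl H
  · obtain ⟨a, ha⟩ := hr
    have hH : H = dihLift (rotSet H) a := eq_dihLift H a ha
    by_cases hk1 : k = n - 1
    · refine ⟨.inr (.inr ()), 1, ?_⟩
      rw [one_smul]
      have htop : rotSet H = ⊤ :=
        AddSubgroup.eq_top_of_card_eq _ (by rw [hck, hk1, Nat.card_zmod])
      rw [htop, dihLift_top] at hH
      rw [FF, hH]
    · have hk2 : k ≤ n - 2 := by omega
      by_cases hae : Ev a
      · obtain ⟨t, rfl⟩ := hae
        refine ⟨.inr (.inl (⟨k, by omega⟩, false)), ConjAct.toConjAct (DihedralGroup.r (-t)), ?_⟩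
        rw [FF, conj_dihLift]
        rw [hH, hA]
        congr 1
        norm_num
        try ring
      · obtain ⟨t, rfl⟩ := not_ev hm2 hae
        refine ⟨.inr (.inl (⟨k, by omega⟩, true)), ConjAct.toConjAct (DihedralGroup.r (-t)), ?_⟩
        rw [FF, conj_dihLift]
        rw [hH, hA]
        congr 1
        norm_num
        try ring
  · refine ⟨.inl ⟨k, by omega⟩, 1, ?_⟩
    rw [one_smul, FF]
    rw [eq_rotLift H hr, hA]

lemma fInv_FF_injective (hn : 3 ≤ n) : Function.Injective (fun t : Idx n => fInv (FF n t)) := by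
  have hpow : ∀ {a b : ℕ}, (2:ℕ) ^ a = 2 ^ b → a = b :=
    fun h => Nat.pow_right_injective (le_refl 2) h
  rintro (k | ⟨k, b⟩ | u) (k' | ⟨k', b'⟩ | u') h <;>
    simp only [fInv_FF_inl hn, fInv_FF_inr hn, fInv_FF_top hn, Prod.mk.injEq] at h
  · obtain ⟨h1, -⟩ := h
    exact congrArg Sum.inl (Fin.ext (hpow h1))
  · cases b' <;> simp at h
  · simp at h
  · cases b <;> simp at h
  · obtain ⟨h1, h2⟩ := h
    have : (k : ℕ) = (k' : ℕ) := hpow h1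
    cases b <;> cases b' <;> simp_all [Fin.ext_iff]
  · obtain ⟨h1, h2⟩ := h
    have hkk : (k : ℕ) = n - 1 := hpow h1
    have := k.isLt
    omega
  · simp at h
  · obtain ⟨h1, h2⟩ := h
    have hkk : n - 1 = (k' : ℕ) := hpow h1
    have := k'.isLt
    omega
  · rfl
end DihCount

open Pointwise

/-- For `n ≥ 3`, the dihedral group `D_{2^n}` of order `2^n` has exactly
`3n - 1` conjugacy classes of subgroups. -/
theorem dihedral_numConjClassesSubgroups (n : ℕ) (hn : 3 ≤ n) :
    numConjClassesSubgroups (DihedralGroup (2 ^ (n - 1))) = 3 * n - 1 := by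
  classical
  set G := DihedralGroup (2 ^ (n - 1)) with hG
  let q : DihCount.Idx n → Quotient (MulAction.orbitRel (ConjAct G) (Subgroup G)) :=
    fun t => Quotient.mk (MulAction.orbitRel (ConjAct G) (Subgroup G)) (DihCount.FF n t)
  have key : Function.Bijective q := by
    constructor
    · intro t t' h
      apply DihCount.fInv_FF_injective hn
      have h' : DihCount.FF n t ∈ MulAction.orbit (ConjAct G) (DihCount.FF n t') :=
        Quotient.exact h
      obtain ⟨g, hg⟩ := MulAction.mem_orbit_iff.mp h'
      show DihCount.fInv (DihCount.FF n t) = DihCount.fInv (DihCount.FF n t')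
      rw [← hg, DihCount.fInv_conj]
    · intro x
      obtain ⟨H, rfl⟩ := Quotient.exists_rep x
      obtain ⟨t, g, hg⟩ := DihCount.exists_conj hn H
      exact ⟨t, Quotient.sound (MulAction.mem_orbit_iff.mpr ⟨g⁻¹, by rw [← hg, inv_smul_smul]⟩)⟩
  have hcard := Nat.card_eq_of_bijective _ key
  rw [numConjClassesSubgroups, ← hcard]
  have hidx : Nat.card (DihCount.Idx n) = n + ((n - 1) * 2 + 1) := by
    simp [Nat.card_eq_fintype_card]
  omega
end

section
/- For the dihedral group D_{2^n} (n ≥ 3), the ratio d'(D_{2^n}) = k'(G)/|L(G)| of the number of conjugacy classes of subgroups to the total number of subgroups equals (3n-1)/(2^n + n - 1). -/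
open Pointwise DihedralGroup AddSubgroup

namespace DihedralCount

variable {m : ℕ}

variable {m : ℕ}

variable {m : ℕ}

/-- The dihedral-type subgroup of `DihedralGroup m` with rotation part `A` and
reflection coset `i`. -/
def dsub (A : AddSubgroup (ZMod m)) (i : ZMod m) : Subgroup (DihedralGroup m) where
  carrier := {x | match x with | .r j => j ∈ A | .sr j => j - i ∈ A}
  one_mem' := by exact A.zero_mem
  mul_mem' := by
    rintro (a | a) (b | b) ha hb
    · exact A.add_mem ha hb
    · show b - a - i ∈ A
      have h : b - a - i = (b - i) + (-a) := by ring
      rw [h]; exact A.add_mem hb (A.neg_mem ha)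
    · show a + b - i ∈ A
      have h : a + b - i = (a - i) + b := by ring
      rw [h]; exact A.add_mem ha hb
    · show b - a ∈ A
      have h : b - a = (b - i) - (a - i) := by ring
      rw [h]; exact A.sub_mem hb ha
  inv_mem' := by
    rintro (a | a) ha
    · exact A.neg_mem ha
    · exact ha

/-- The rotation-only subgroup of `DihedralGroup m` with rotation part `A`. -/
def rsub (A : AddSubgroup (ZMod m)) : Subgroup (DihedralGroup m) where
  carrier := {x | match x with | .r j => j ∈ A | .sr _ => False}
  one_mem' := by exact A.zero_mem
  mul_mem' := by
    rintro (a | a) (b | b) ha hb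
    · exact A.add_mem ha hb
    · exact hb.elim
    · exact ha.elim
    · exact ha.elim
  inv_mem' := by
    rintro (a | a) ha
    · exact A.neg_mem ha
    · exact ha

@[simp] lemma r_mem_dsub {A : AddSubgroup (ZMod m)} {i j : ZMod m} :
    DihedralGroup.r j ∈ dsub A i ↔ j ∈ A := Iff.rfl

@[simp] lemma sr_mem_dsub {A : AddSubgroup (ZMod m)} {i j : ZMod m} :
    DihedralGroup.sr j ∈ dsub A i ↔ j - i ∈ A := Iff.rfl

@[simp] lemma r_mem_rsub {A : AddSubgroup (ZMod m)} {j : ZMod m} :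
    DihedralGroup.r j ∈ rsub A ↔ j ∈ A := Iff.rfl

@[simp] lemma sr_not_mem_rsub {A : AddSubgroup (ZMod m)} {j : ZMod m} :
    DihedralGroup.sr j ∉ rsub A := fun h => h



/-- The rotation part of a subgroup. -/
def rpart (H : Subgroup (DihedralGroup m)) : AddSubgroup (ZMod m) where
  carrier := {j | DihedralGroup.r j ∈ H}
  zero_mem' := by simpa [← one_def] using H.one_mem
  add_mem' := by
    intro a b ha hb
    simpa using H.mul_mem ha hb
  neg_mem' := by
    intro a ha
    exact H.inv_mem ha

@[simp] lemma mem_rpart {H : Subgroup (DihedralGroup m)} {j : ZMod m} :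
    j ∈ rpart H ↔ DihedralGroup.r j ∈ H := Iff.rfl

lemma rpart_rsub (A : AddSubgroup (ZMod m)) : rpart (rsub A) = A := by
  ext j; rfl

lemma rpart_dsub (A : AddSubgroup (ZMod m)) (i : ZMod m) : rpart (dsub A i) = A := by
  ext j; rfl

lemma classify (H : Subgroup (DihedralGroup m)) :
    H = rsub (rpart H) ∨ ∃ i, H = dsub (rpart H) i := by
  by_cases h : ∃ i, DihedralGroup.sr i ∈ H
  · obtain ⟨i, hi⟩ := h
    refine Or.inr ⟨i, ?_⟩
    ext x
    cases x with
    | r j => rfl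
    | sr j =>
      simp only [sr_mem_dsub, mem_rpart]
      constructor
      · intro hj
        simpa using H.mul_mem hi hj
      · intro hj
        have h2 := H.mul_mem hi hj
        simp only [sr_mul_r] at h2
        rwa [show i + (j - i) = j by ring] at h2
  · push_neg at h
    refine Or.inl ?_
    ext x
    cases x with
    | r j => rfl
    | sr j => simpa using h j

lemma dsub_eq_dsub_iff {A B : AddSubgroup (ZMod m)} {i j : ZMod m} :
    dsub A i = dsub B j ↔ A = B ∧ i - j ∈ B := by
  constructor
  · intro h
    have hA : A = B := by rw [← rpart_dsub A i, ← rpart_dsub B j, h]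
    refine ⟨hA, ?_⟩
    have hi : DihedralGroup.sr i ∈ dsub A i := by simpa using A.zero_mem
    rw [h] at hi
    simpa using hi
  · rintro ⟨rfl, hij⟩
    ext x
    cases x with
    | r k => rfl
    | sr k =>
      simp only [sr_mem_dsub]
      constructor
      · intro hk
        have h2 : k - j = (k - i) + (i - j) := by ring
        rw [h2]; exact A.add_mem hk hij
      · intro hk
        have h2 : k - i = (k - j) - (i - j) := by ring
        rw [h2]; exact A.sub_mem hk hij

lemma rsub_ne_dsub (A B : AddSubgroup (ZMod m)) (i : ZMod m) : rsub A ≠ dsub B i := by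
  intro h
  have hi : DihedralGroup.sr i ∈ dsub B i := by simpa using B.zero_mem
  rw [← h] at hi
  exact sr_not_mem_rsub hi

/-- Explicit parametrization of the subgroups of a dihedral group. -/
noncomputable def subgroupEquiv (m : ℕ) :
    (AddSubgroup (ZMod m) ⊕ Σ A : AddSubgroup (ZMod m), ZMod m ⧸ A) ≃
      Subgroup (DihedralGroup m) := by
  refine Equiv.ofBijective
    (Sum.elim rsub (fun p => Quotient.liftOn' p.2 (dsub p.1) ?_)) ⟨?_, ?_⟩
  · intro a b hab
    rw [QuotientAddGroup.leftRel_apply] at hab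
    rw [dsub_eq_dsub_iff]
    refine ⟨rfl, ?_⟩
    have : a - b = -(-a + b) := by ring
    rw [this]
    exact p.1.neg_mem hab
  · rintro (A | ⟨A, x⟩) (B | ⟨B, y⟩) h
    · simp only [Sum.elim_inl] at h
      have h2 := congrArg rpart h
      rw [rpart_rsub, rpart_rsub] at h2
      rw [h2]
    · induction y using Quotient.inductionOn' with
      | h j => exact absurd h (rsub_ne_dsub _ _ _)
    · induction x using Quotient.inductionOn' with
      | h i => exact absurd h.symm (rsub_ne_dsub _ _ _)
    · induction x using Quotient.inductionOn' with
      | h i =>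
        induction y using Quotient.inductionOn' with
        | h j =>
          simp only [Sum.elim_inr] at h
          rw [Quotient.liftOn'_mk'', Quotient.liftOn'_mk''] at h
          obtain ⟨hAB, hij⟩ := dsub_eq_dsub_iff.mp h
          subst hAB
          have hq : (Quotient.mk'' i : ZMod m ⧸ A) = Quotient.mk'' j := by
            rw [Quotient.eq'']
            rw [QuotientAddGroup.leftRel_apply]
            have : -i + j = -(i - j) := by ring
            rw [this]
            exact A.neg_mem hij
          rw [hq]
  · intro H
    rcases classify H with h | ⟨i, h⟩
    · exact ⟨Sum.inl (rpart H), h.symm⟩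
    · exact ⟨Sum.inr ⟨rpart H, Quotient.mk'' i⟩, by
        simp only [Sum.elim_inr]
        rw [Quotient.liftOn'_mk'']
        exact h.symm⟩

lemma addsub_eq_of_le_of_card_le {M : Type*} [AddGroup M] {A B : AddSubgroup M} (h : A ≤ B)
    (hB : (B : Set M).Finite) (hc : Nat.card B ≤ Nat.card A) : A = B := by
  apply SetLike.ext'
  refine Set.eq_of_subset_of_ncard_le h ?_ hB
  rwa [← Nat.card_coe_set_eq, ← Nat.card_coe_set_eq]

/-- Every additive subgroup of `ZMod m` is cyclic, generated by one element. -/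
lemma exists_zmultiples {m : ℕ} (A : AddSubgroup (ZMod m)) :
    ∃ g : ZMod m, A = zmultiples g := by
  set f := Int.castAddHom (ZMod m) with hf
  have hsurj : Function.Surjective f := ZMod.intCast_surjective
  obtain ⟨a, ha⟩ := Int.subgroup_cyclic (A.comap f)
  refine ⟨f a, ?_⟩
  have h1 : A = (A.comap f).map f := (AddSubgroup.map_comap_eq_self_of_surjective hsurj A).symm
  rw [h1, ha, ← AddSubgroup.zmultiples_eq_closure, AddMonoidHom.map_zmultiples]

variable {e : ℕ}

lemma card_zmultiples_pow (e : ℕ) {k : ℕ} (hk : k ≤ e) :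
    Nat.card (zmultiples ((2 : ZMod (2^e))^k)) = 2^(e-k) := by
  have h2 : ((2 : ZMod (2^e))^k) = ((2^k : ℕ) : ZMod (2^e)) := by push_cast; ring
  rw [Nat.card_zmultiples, h2, ZMod.addOrderOf_coe _ (pow_ne_zero e two_ne_zero)]
  have hg : Nat.gcd (2^e) (2^k) = 2^k := Nat.gcd_eq_right (pow_dvd_pow 2 hk)
  rw [hg, Nat.pow_div hk two_pos]

lemma mem_zmultiples_pow_of_smul_eq_zero {j k : ℕ} (hjk : j + k = e) {g : ZMod (2^e)}
    (hg : (2^j : ℕ) • g = 0) : g ∈ zmultiples ((2 : ZMod (2^e))^k) := by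
  haveI : NeZero (2^e) := ⟨pow_ne_zero e two_ne_zero⟩
  have hgv : ((g.val : ℕ) : ZMod (2^e)) = g := ZMod.natCast_rightInverse g
  have h0 : (((2^j * g.val : ℕ)) : ZMod (2^e)) = 0 := by
    push_cast
    rw [hgv] at *
    simpa [nsmul_eq_mul] using hg
  rw [ZMod.natCast_eq_zero_iff] at h0
  have hdvd : 2^k ∣ g.val := by
    have h1 : 2^j * 2^k ∣ 2^j * g.val := by
      rw [← pow_add, hjk]; exact h0
    exact (mul_dvd_mul_iff_left (a := (2:ℕ)^j) (by positivity)).mp h1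
  obtain ⟨t, ht⟩ := hdvd
  refine ⟨(t : ℤ), ?_⟩
  show (t : ℤ) • ((2 : ZMod (2^e))^k) = g
  have hgeq : g = ((2^k * t : ℕ) : ZMod (2^e)) := by rw [← ht, hgv]
  rw [zsmul_eq_mul, hgeq]
  push_cast
  ring

/-- Classification of subgroups of `ZMod (2^e)`. -/
lemma addsub_classify (A : AddSubgroup (ZMod (2^e))) :
    ∃ k ≤ e, A = zmultiples ((2 : ZMod (2^e))^k) := by
  haveI : NeZero (2^e) := ⟨pow_ne_zero e two_ne_zero⟩
  obtain ⟨g, rfl⟩ := exists_zmultiples A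
  have hdvd : Nat.card (zmultiples g) ∣ 2^e := by
    have := AddSubgroup.card_addSubgroup_dvd_card (zmultiples g)
    rwa [Nat.card_zmod] at this
  obtain ⟨j, hj, hcard⟩ := (Nat.dvd_prime_pow Nat.prime_two).mp hdvd
  refine ⟨e - j, Nat.sub_le e j, ?_⟩
  have horder : addOrderOf g = 2^j := by rw [← Nat.card_zmultiples, hcard]
  have hsmul : (2^j : ℕ) • g = 0 := by
    rw [← horder]; exact addOrderOf_nsmul_eq_zero g
  have hmem : g ∈ zmultiples ((2 : ZMod (2^e))^(e-j)) :=
    mem_zmultiples_pow_of_smul_eq_zero (by omega) hsmul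
  refine addsub_eq_of_le_of_card_le ((zmultiples_le).mpr hmem) (Set.toFinite _) ?_
  rw [hcard, card_zmultiples_pow e (Nat.sub_le e j), Nat.sub_sub_self hj]

/-- The subgroups of `ZMod (2^e)` are parametrized by `Fin (e+1)`. -/
noncomputable def addSubgroupEquiv (e : ℕ) : Fin (e+1) ≃ AddSubgroup (ZMod (2^e)) := by
  refine Equiv.ofBijective (fun k => zmultiples ((2 : ZMod (2^e))^(k : ℕ))) ⟨?_, ?_⟩
  · intro k l h
    have hk := card_zmultiples_pow e (Nat.lt_succ_iff.mp k.2)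
    have hl := card_zmultiples_pow e (Nat.lt_succ_iff.mp l.2)
    have h' : zmultiples ((2 : ZMod (2^e))^(k : ℕ)) = zmultiples ((2 : ZMod (2^e))^(l : ℕ)) := h
    rw [h', hl] at hk
    have := Nat.pow_right_injective (le_refl 2) hk
    have hk2 := Nat.lt_succ_iff.mp k.2
    have hl2 := Nat.lt_succ_iff.mp l.2
    ext
    omega
  · intro A
    obtain ⟨k, hk, hA⟩ := addsub_classify A
    exact ⟨⟨k, Nat.lt_succ_of_le hk⟩, hA.symm⟩

lemma card_sigma_fin {N : ℕ} (f : Fin N → Type*) [∀ i, Finite (f i)] :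
    Nat.card (Σ i, f i) = ∑ i, Nat.card (f i) := by
  haveI : ∀ i, Fintype (f i) := fun i => Fintype.ofFinite _
  simp [Nat.card_eq_fintype_card, Fintype.card_sigma]

lemma sum_pow_two (N : ℕ) : ∑ i ∈ Finset.range N, 2^i = 2^N - 1 := by
  induction N with
  | zero => simp
  | succ n ih =>
    rw [Finset.sum_range_succ, ih]
    have h1 : 1 ≤ 2^n := Nat.one_le_two_pow
    have h2 : 2^(n+1) = 2 * 2^n := by ring
    omega

lemma card_quot (e : ℕ) {k : ℕ} (hk : k ≤ e) :
    Nat.card (ZMod (2^e) ⧸ zmultiples ((2 : ZMod (2^e))^k)) = 2^k := by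
  haveI : NeZero (2^e) := ⟨pow_ne_zero e two_ne_zero⟩
  have h := AddSubgroup.card_eq_card_quotient_mul_card_addSubgroup
    (zmultiples ((2 : ZMod (2^e))^k))
  rw [Nat.card_zmod] at h
  have hc : Nat.card (zmultiples ((2 : ZMod (2^e))^k)) = 2^(e-k) := by
    rw [Nat.card_zmultiples]
    have h2 : ((2 : ZMod (2^e))^k) = ((2^k : ℕ) : ZMod (2^e)) := by push_cast; ring
    rw [h2, ZMod.addOrderOf_coe _ (pow_ne_zero e two_ne_zero),
      Nat.gcd_eq_right (pow_dvd_pow 2 hk), Nat.pow_div hk two_pos]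
  rw [hc] at h
  have hsplit : 2^e = 2^k * 2^(e-k) := by rw [← pow_add]; congr 1; omega
  exact Nat.eq_of_mul_eq_mul_right (Nat.pow_pos two_pos) (h.symm.trans hsplit)


@[simp] lemma dihedral_inv_r (a : ZMod m) : (DihedralGroup.r a)⁻¹ = DihedralGroup.r (-a) := rfl
@[simp] lemma dihedral_inv_sr (a : ZMod m) : (DihedralGroup.sr a)⁻¹ = DihedralGroup.sr a := rfl

lemma mem_conj_smul {G : Type*} [Group G] (g x : G) (H : Subgroup G) :
    x ∈ ConjAct.toConjAct g • H ↔ g⁻¹ * x * g ∈ H := by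
  rw [Subgroup.mem_pointwise_smul_iff_inv_smul_mem]
  simp [ConjAct.smul_def, mul_assoc]

lemma conj_r_smul_dsub (a : ZMod m) (A : AddSubgroup (ZMod m)) (i : ZMod m) :
    ConjAct.toConjAct (DihedralGroup.r a) • dsub A i = dsub A (i - 2*a) := by
  ext x
  rw [mem_conj_smul]
  cases x with
  | r j => simp
  | sr j =>
    simp only [dihedral_inv_r, r_mul_sr, sr_mul_r, sr_mem_dsub]
    constructor
    · intro h
      rwa [show j - (i - 2*a) = j - -a + a - i by ring]
    · intro h
      rwa [show j - -a + a - i = j - (i - 2*a) by ring]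

lemma conj_sr_smul_dsub (a : ZMod m) (A : AddSubgroup (ZMod m)) (i : ZMod m) :
    ConjAct.toConjAct (DihedralGroup.sr a) • dsub A i = dsub A (2*a - i) := by
  ext x
  rw [mem_conj_smul]
  cases x with
  | r j =>
    simp only [dihedral_inv_sr, sr_mul_r, sr_mul_sr, r_mem_dsub]
    constructor
    · intro h
      rw [show a - (a + j) = -j by ring] at h
      exact A.neg_mem_iff.mp h
    · intro h
      rw [show a - (a + j) = -j by ring]
      exact A.neg_mem h
  | sr j =>
    simp only [dihedral_inv_sr, sr_mul_sr, r_mul_sr, sr_mem_dsub]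
    constructor
    · intro h
      rw [show j - (2*a - i) = -(a - (j - a) - i) by ring]
      exact A.neg_mem h
    · intro h
      rw [show a - (j - a) - i = -(j - (2*a - i)) by ring]
      exact A.neg_mem h

lemma conj_smul_rsub (g : ConjAct (DihedralGroup m)) (A : AddSubgroup (ZMod m)) :
    g • rsub A = rsub A := by
  have hg : g = ConjAct.toConjAct (ConjAct.ofConjAct g) := rfl
  rw [hg]
  cases hx : ConjAct.ofConjAct g with
  | r a =>
    ext x
    rw [mem_conj_smul]
    cases x with
    | r j => simp
    | sr j =>
      simp only [dihedral_inv_r, r_mul_sr, sr_mul_r]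
      exact ⟨fun h => (sr_not_mem_rsub h).elim, fun h => (sr_not_mem_rsub h).elim⟩
  | sr a =>
    ext x
    rw [mem_conj_smul]
    cases x with
    | r j =>
      simp only [dihedral_inv_sr, sr_mul_r, sr_mul_sr, r_mem_rsub]
      constructor
      · intro h
        rw [show a - (a + j) = -j by ring] at h
        exact A.neg_mem_iff.mp h
      · intro h
        rw [show a - (a + j) = -j by ring]
        exact A.neg_mem h
    | sr j =>
      simp only [dihedral_inv_sr, sr_mul_sr, r_mul_sr]
      exact ⟨fun h => (sr_not_mem_rsub h).elim, fun h => (sr_not_mem_rsub h).elim⟩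

lemma two_mul_mem_zmultiples (x : ZMod m) : 2 * x ∈ zmultiples (2 : ZMod m) := by
  obtain ⟨z, rfl⟩ := ZMod.intCast_surjective x
  refine ⟨z, ?_⟩
  show z • (2 : ZMod m) = 2 * (z : ZMod m)
  rw [zsmul_eq_mul]
  ring

lemma conj_smul_dsub (g : ConjAct (DihedralGroup m)) (A : AddSubgroup (ZMod m)) (i : ZMod m) :
    ∃ j : ZMod m, g • dsub A i = dsub A j ∧ i - j ∈ zmultiples (2 : ZMod m) := by
  have hg : g = ConjAct.toConjAct (ConjAct.ofConjAct g) := rfl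
  cases hx : ConjAct.ofConjAct g with
  | r a =>
    refine ⟨i - 2*a, by rw [hg, hx, conj_r_smul_dsub], ?_⟩
    rw [show i - (i - 2*a) = 2*a by ring]
    exact two_mul_mem_zmultiples a
  | sr a =>
    refine ⟨2*a - i, by rw [hg, hx, conj_sr_smul_dsub], ?_⟩
    rw [show i - (2*a - i) = 2*(i - a) by ring]
    exact two_mul_mem_zmultiples (i - a)

lemma dsub_orbitRel (A : AddSubgroup (ZMod m)) {i j : ZMod m}
    (h : j - i ∈ A ⊔ zmultiples (2 : ZMod m)) :
    (Quotient.mk'' (dsub A i) :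
      Quotient (MulAction.orbitRel (ConjAct (DihedralGroup m)) (Subgroup (DihedralGroup m)))) =
      Quotient.mk'' (dsub A j) := by
  rw [AddSubgroup.mem_sup] at h
  obtain ⟨α, hα, b, hb, hab⟩ := h
  obtain ⟨z, hz⟩ := hb
  apply Quotient.sound'
  rw [MulAction.orbitRel_apply, MulAction.mem_orbit_iff]
  refine ⟨ConjAct.toConjAct (DihedralGroup.r (z • (1 : ZMod m))), ?_⟩
  rw [conj_r_smul_dsub]
  rw [dsub_eq_dsub_iff]
  refine ⟨rfl, ?_⟩
  have hz' : z • (2 : ZMod m) = b := hz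
  have hb2 : 2 * (z • (1 : ZMod m)) = b := by
    rw [← hz', zsmul_eq_mul, zsmul_eq_mul]
    ring
  have key : j - 2 * (z • (1 : ZMod m)) - i = α := by linear_combination -hab - hb2
  rw [key]
  exact hα

/-- The orbit classes of subgroups of the dihedral group. -/
noncomputable def orbitEquiv (m : ℕ) :
    (AddSubgroup (ZMod m) ⊕
        Σ A : AddSubgroup (ZMod m), ZMod m ⧸ (A ⊔ zmultiples (2 : ZMod m))) ≃
      Quotient (MulAction.orbitRel (ConjAct (DihedralGroup m)) (Subgroup (DihedralGroup m))) := by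
  refine Equiv.ofBijective
    (Sum.elim (fun A => Quotient.mk'' (rsub A))
      (fun p => Quotient.liftOn' p.2 (fun i => Quotient.mk'' (dsub p.1 i)) ?_)) ⟨?_, ?_⟩
  · intro a b hab
    rw [QuotientAddGroup.leftRel_apply] at hab
    exact dsub_orbitRel p.1 (by rwa [show b - a = -a + b by ring])
  · rintro (A | ⟨A, x⟩) (B | ⟨B, y⟩) h
    · simp only [Sum.elim_inl] at h
      have h2 := Quotient.exact' h
      rw [MulAction.orbitRel_apply, MulAction.mem_orbit_iff] at h2
      obtain ⟨g, hgeq⟩ := h2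
      rw [conj_smul_rsub] at hgeq
      have h3 := congrArg rpart hgeq
      rw [rpart_rsub, rpart_rsub] at h3
      rw [h3]
    · induction y using Quotient.inductionOn' with
      | h j =>
        simp only [Sum.elim_inl, Sum.elim_inr] at h
        rw [Quotient.liftOn'_mk''] at h
        have h2 := Quotient.exact' h
        rw [MulAction.orbitRel_apply, MulAction.mem_orbit_iff] at h2
        obtain ⟨g, hgeq⟩ := h2
        obtain ⟨j', hj', -⟩ := conj_smul_dsub g B j
        rw [hj'] at hgeq
        exact absurd hgeq.symm (rsub_ne_dsub _ _ _)
    · induction x using Quotient.inductionOn' with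
      | h i =>
        simp only [Sum.elim_inl, Sum.elim_inr] at h
        rw [Quotient.liftOn'_mk''] at h
        have h2 := Quotient.exact' h.symm
        rw [MulAction.orbitRel_apply, MulAction.mem_orbit_iff] at h2
        obtain ⟨g, hgeq⟩ := h2
        obtain ⟨i', hi', -⟩ := conj_smul_dsub g A i
        rw [hi'] at hgeq
        exact absurd hgeq.symm (rsub_ne_dsub _ _ _)
    · induction x using Quotient.inductionOn' with
      | h i =>
        induction y using Quotient.inductionOn' with
        | h j =>
          simp only [Sum.elim_inr] at h
          rw [Quotient.liftOn'_mk'', Quotient.liftOn'_mk''] at h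
          have h2 := Quotient.exact' h
          rw [MulAction.orbitRel_apply, MulAction.mem_orbit_iff] at h2
          obtain ⟨g, hgeq⟩ := h2
          obtain ⟨j', hj', hjj'⟩ := conj_smul_dsub g B j
          rw [hj'] at hgeq
          obtain ⟨hBA, hji⟩ := dsub_eq_dsub_iff.mp hgeq
          subst hBA
          have hq : (Quotient.mk'' i : ZMod m ⧸ (B ⊔ zmultiples (2 : ZMod m))) =
              Quotient.mk'' j := by
            rw [Quotient.eq'', QuotientAddGroup.leftRel_apply]
            have hmem1 : j' - i ∈ B ⊔ zmultiples (2 : ZMod m) :=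
              le_sup_left (α := AddSubgroup (ZMod m)) hji
            have hmem2 : j - j' ∈ B ⊔ zmultiples (2 : ZMod m) :=
              le_sup_right (α := AddSubgroup (ZMod m)) hjj'
            have h5 := (B ⊔ zmultiples (2 : ZMod m)).add_mem hmem1 hmem2
            rwa [show (j' - i) + (j - j') = -i + j by ring] at h5
          rw [hq]
  · intro q
    induction q using Quotient.inductionOn' with
    | h H =>
      rcases classify H with h | ⟨i, h⟩
      · refine ⟨Sum.inl (rpart H), ?_⟩
        simp only [Sum.elim_inl]
        rw [← h]
      · refine ⟨Sum.inr ⟨rpart H, Quotient.mk'' i⟩, ?_⟩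
        simp only [Sum.elim_inr]
        rw [Quotient.liftOn'_mk'', ← h]

lemma addSubgroupEquiv_apply (e : ℕ) (k : Fin (e+1)) :
    addSubgroupEquiv e k = zmultiples ((2 : ZMod (2^e))^(k : ℕ)) := rfl

lemma card_numSubgroups (e : ℕ) :
    Nat.card (Subgroup (DihedralGroup (2^e))) = (e+1) + (2^(e+1) - 1) := by
  haveI : NeZero (2^e) := ⟨pow_ne_zero e two_ne_zero⟩
  haveI : Finite (AddSubgroup (ZMod (2^e))) := Finite.of_equiv _ (addSubgroupEquiv e)
  rw [← Nat.card_congr (subgroupEquiv (2^e)), Nat.card_sum]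
  congr 1
  · rw [Nat.card_congr (addSubgroupEquiv e).symm, Nat.card_eq_fintype_card, Fintype.card_fin]
  · rw [Nat.card_congr (Equiv.sigmaCongrLeft
      (β := fun A : AddSubgroup (ZMod (2^e)) => ZMod (2^e) ⧸ A) (addSubgroupEquiv e)).symm,
      card_sigma_fin]
    have hterm : ∀ k : Fin (e+1),
        Nat.card (ZMod (2^e) ⧸ (addSubgroupEquiv e k)) = 2^(k : ℕ) := by
      intro k
      rw [addSubgroupEquiv_apply]
      exact card_quot e (Nat.lt_succ_iff.mp k.2)
    rw [Finset.sum_congr rfl (fun k _ => hterm k),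
      Fin.sum_univ_eq_sum_range (fun k => 2^k) (e+1), sum_pow_two]

lemma zmod_zmultiples_one_eq_top {m : ℕ} [NeZero m] : zmultiples (1 : ZMod m) = ⊤ := by
  rw [eq_top_iff']
  intro x
  refine ⟨(x.val : ℤ), ?_⟩
  show (x.val : ℤ) • (1 : ZMod m) = x
  rw [zsmul_eq_mul, mul_one]
  push_cast
  exact ZMod.natCast_rightInverse x

lemma sup_zmultiples_pow (e : ℕ) {k : ℕ} (hk : 1 ≤ k) :
    zmultiples ((2 : ZMod (2^e))^k) ⊔ zmultiples (2 : ZMod (2^e)) =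
      zmultiples (2 : ZMod (2^e)) := by
  rw [sup_eq_right, zmultiples_le]
  refine ⟨((2 : ℤ)^(k-1)), ?_⟩
  show ((2 : ℤ)^(k-1)) • (2 : ZMod (2^e)) = (2 : ZMod (2^e))^k
  rw [zsmul_eq_mul]
  push_cast
  rw [← pow_succ]
  congr 1
  omega

lemma sum_if_eq (e : ℕ) :
    ∑ k ∈ Finset.range (e+1), (if k = 0 then 1 else 2) = 1 + 2*e := by
  induction e with
  | zero => simp
  | succ t ih =>
    rw [Finset.sum_range_succ, ih, if_neg (Nat.succ_ne_zero t)]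
    omega

lemma card_numConj (e : ℕ) (he : 1 ≤ e) :
    Nat.card (Quotient (MulAction.orbitRel (ConjAct (DihedralGroup (2^e)))
      (Subgroup (DihedralGroup (2^e))))) = (e+1) + (1 + 2*e) := by
  haveI : NeZero (2^e) := ⟨pow_ne_zero e two_ne_zero⟩
  haveI : Finite (AddSubgroup (ZMod (2^e))) := Finite.of_equiv _ (addSubgroupEquiv e)
  rw [← Nat.card_congr (orbitEquiv (2^e)), Nat.card_sum]
  congr 1
  · rw [Nat.card_congr (addSubgroupEquiv e).symm, Nat.card_eq_fintype_card, Fintype.card_fin]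
  · rw [Nat.card_congr (Equiv.sigmaCongrLeft
      (β := fun A : AddSubgroup (ZMod (2^e)) => ZMod (2^e) ⧸ (A ⊔ zmultiples (2 : ZMod (2^e))))
      (addSubgroupEquiv e)).symm,
      card_sigma_fin]
    have hterm : ∀ k : Fin (e+1),
        Nat.card (ZMod (2^e) ⧸ ((addSubgroupEquiv e k) ⊔ zmultiples (2 : ZMod (2^e)))) =
          if (k : ℕ) = 0 then 1 else 2 := by
      intro k
      rcases Nat.eq_zero_or_pos (k : ℕ) with h0 | h1
      · rw [if_pos h0]
        have htop : (addSubgroupEquiv e k) ⊔ zmultiples (2 : ZMod (2^e)) = ⊤ := by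
          rw [addSubgroupEquiv_apply, h0, pow_zero, zmod_zmultiples_one_eq_top]
          exact top_sup_eq _
        rw [htop]
        haveI : Subsingleton (ZMod (2^e) ⧸ (⊤ : AddSubgroup (ZMod (2^e)))) :=
          QuotientAddGroup.subsingleton_quotient_top
        rw [Nat.card_eq_one_iff_unique]
        exact ⟨inferInstance, inferInstance⟩
      · rw [if_neg (by omega), addSubgroupEquiv_apply, sup_zmultiples_pow e h1]
        have h2 := card_quot e (k := 1) he
        rwa [pow_one, pow_one] at h2
    rw [Finset.sum_congr rfl (fun k _ => hterm k),
      Fin.sum_univ_eq_sum_range (fun k => if k = 0 then 1 else 2) (e+1),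
      sum_if_eq]

end DihedralCount

/-- For `n ≥ 3`, `d'(D_{2^n}) = (3n - 1) / (2^n + n - 1)`. -/
theorem dihedral_dprime (n : ℕ) (hn : 3 ≤ n) :
    dprime (DihedralGroup (2 ^ (n - 1))) = (3 * n - 1 : ℚ) / (2 ^ n + n - 1 : ℚ) := by
  obtain ⟨e, rfl⟩ : ∃ e, n = e + 1 := ⟨n - 1, by omega⟩
  have he : 2 ≤ e := by omega
  rw [dprime, numSubgroups, numConjClassesSubgroups]
  rw [show e + 1 - 1 = e by omega]
  rw [DihedralCount.card_numSubgroups e, DihedralCount.card_numConj e (by omega)]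
  have h1 : ((e+1) + (1 + 2*e) : ℕ) = 3*e + 2 := by omega
  have h2 : ((e+1) + (2^(e+1) - 1) : ℕ) = 2^(e+1) + e := by
    have := Nat.one_le_two_pow (n := e+1)
    omega
  rw [h1, h2]
  push_cast
  congr 1 <;> ring
end

section
/- For an odd prime p, the Heisenberg group He_p of order p^3 and exponent p has exactly p^2 + 2p + 4 subgroups. -/
open Pointwise

/-- The Heisenberg group modulo `p`: triples `(a,b,c)` with
`(a,b,c)*(a',b',c') = (a+a', b+b', c+c'+a·b')`. -/
def Heisenberg (p : ℕ) : Type := ZMod p × ZMod p × ZMod p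

namespace Heisenberg

variable {p : ℕ}

instance : Mul (Heisenberg p) :=
  ⟨fun a b => (a.1 + b.1, a.2.1 + b.2.1, a.2.2 + b.2.2 + a.1 * b.2.1)⟩

instance : One (Heisenberg p) := ⟨((0 : ZMod p), (0 : ZMod p), (0 : ZMod p))⟩

instance : Inv (Heisenberg p) := ⟨fun a => (-a.1, -a.2.1, -a.2.2 + a.1 * a.2.1)⟩

theorem mul_def (a b : Heisenberg p) :
    a * b = (a.1 + b.1, a.2.1 + b.2.1, a.2.2 + b.2.2 + a.1 * b.2.1) := rfl

theorem one_def : (1 : Heisenberg p) = ((0 : ZMod p), 0, 0) := rfl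

theorem inv_def (a : Heisenberg p) : a⁻¹ = (-a.1, -a.2.1, -a.2.2 + a.1 * a.2.1) := rfl

instance : Group (Heisenberg p) where
  mul_assoc a b c := by
    rw [mul_def, mul_def, mul_def, mul_def]
    refine Prod.ext ?_ (Prod.ext ?_ ?_) <;> simp <;> ring
  one_mul a := by
    rw [mul_def, one_def]
    refine Prod.ext ?_ (Prod.ext ?_ ?_) <;> simp
  mul_one a := by
    rw [mul_def, one_def]
    refine Prod.ext ?_ (Prod.ext ?_ ?_) <;> simp
  inv_mul_cancel a := by
    rw [mul_def, inv_def, one_def]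
    refine Prod.ext ?_ (Prod.ext ?_ ?_) <;> simp

instance [NeZero p] : Finite (Heisenberg p) :=
  inferInstanceAs (Finite (ZMod p × ZMod p × ZMod p))

end Heisenberg

namespace HeisAux
open Heisenberg

variable {p : ℕ}

@[simp] theorem ext_iff3 (a b : Heisenberg p) : a = b ↔ a.1 = b.1 ∧ a.2.1 = b.2.1 ∧ a.2.2 = b.2.2 := by
  constructor
  · rintro rfl; exact ⟨rfl, rfl, rfl⟩
  · rintro ⟨h1, h2, h3⟩
    exact Prod.ext h1 (Prod.ext h2 h3)

theorem pow_formula (g : Heisenberg p) (n : ℕ) :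
    g ^ n = ((n : ZMod p) * g.1, (n : ZMod p) * g.2.1,
      (n : ZMod p) * g.2.2 + (n.choose 2 : ZMod p) * (g.1 * g.2.1)) := by
  induction n with
  | zero => simp [one_def, ext_iff3]; rfl
  | succ n ih =>
    rw [pow_succ, mul_def, ih]
    have h : (n+1).choose 2 = n.choose 2 + n := by
      simp [Nat.choose_succ_succ, Nat.choose_one_right, Nat.add_comm]
    refine (ext_iff3 _ _).mpr ?_
    refine ⟨?_, ?_, ?_⟩ <;> simp [h] <;> push_cast <;> ring

/-- The center `{(0,0,c)}` as a subgroup. -/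
def subZ (p : ℕ) : Subgroup (Heisenberg p) where
  carrier := {g | g.1 = 0 ∧ g.2.1 = 0}
  mul_mem' := by rintro a b ⟨h1, h2⟩ ⟨h3, h4⟩; simp only [Set.mem_setOf_eq]; simp_all [mul_def, Set.mem_setOf_eq]
  one_mem' := by simp only [Set.mem_setOf_eq]; simp [one_def, Set.mem_setOf_eq]
  inv_mem' := by rintro a ⟨h1, h2⟩; simp only [Set.mem_setOf_eq]; simp_all [inv_def, Set.mem_setOf_eq]

/-- Maximal subgroup `{y = m x}`. -/
def subM (p : ℕ) (m : ZMod p) : Subgroup (Heisenberg p) where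
  carrier := {g | g.2.1 = m * g.1}
  mul_mem' := by rintro a b h1 h2; simp only [Set.mem_setOf_eq]; simp_all [mul_def, Set.mem_setOf_eq]; ring
  one_mem' := by simp only [Set.mem_setOf_eq]; simp [one_def, Set.mem_setOf_eq]
  inv_mem' := by rintro a h1; simp only [Set.mem_setOf_eq]; simp_all [inv_def, Set.mem_setOf_eq]

/-- Maximal subgroup `{x = 0}`. -/
def subMi (p : ℕ) : Subgroup (Heisenberg p) where
  carrier := {g | g.1 = 0}
  mul_mem' := by rintro a b h1 h2; simp only [Set.mem_setOf_eq]; simp_all [mul_def, Set.mem_setOf_eq]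
  one_mem' := by simp only [Set.mem_setOf_eq]; simp [one_def, Set.mem_setOf_eq]
  inv_mem' := by rintro a h1; simp only [Set.mem_setOf_eq]; simp_all [inv_def, Set.mem_setOf_eq]

/-- Small subgroup: the cyclic group generated by `(1, m, c)`, for `p` odd
(`i` is the inverse of `2`). -/
def subS (p : ℕ) (m c i : ZMod p) (hi : 2 * i = 1) : Subgroup (Heisenberg p) where
  carrier := {g | g.2.1 = m * g.1 ∧ g.2.2 = c * g.1 + m * g.1 * (g.1 - 1) * i}
  mul_mem' := by
    rintro a b ⟨h1, h2⟩ ⟨h3, h4⟩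
    simp only [mul_def, Set.mem_setOf_eq] at *
    constructor
    · rw [h1, h3]; ring
    · rw [h2, h4, h3]; linear_combination (-(m * a.1 * b.1)) * hi
  one_mem' := by simp only [Set.mem_setOf_eq]; simp [one_def, Set.mem_setOf_eq]
  inv_mem' := by
    rintro a ⟨h1, h2⟩
    simp only [inv_def, Set.mem_setOf_eq] at *
    constructor
    · rw [h1]; ring
    · rw [h2, h1]; linear_combination (-(m * a.1 ^ 2)) * hi

/-- Small subgroup: the cyclic group generated by `(0, 1, c)`. -/
def subSi (p : ℕ) (c : ZMod p) : Subgroup (Heisenberg p) where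
  carrier := {g | g.1 = 0 ∧ g.2.2 = c * g.2.1}
  mul_mem' := by
    rintro a b ⟨h1, h2⟩ ⟨h3, h4⟩
    simp only [mul_def, Set.mem_setOf_eq] at *
    refine ⟨by rw [h1, h3]; ring, by rw [h2, h4, h1]; ring⟩
  one_mem' := by simp only [Set.mem_setOf_eq]; simp [one_def, Set.mem_setOf_eq]
  inv_mem' := by
    rintro a ⟨h1, h2⟩
    simp only [inv_def, Set.mem_setOf_eq] at *
    refine ⟨by rw [h1]; ring, by rw [h2, h1]; ring⟩
@[simp] theorem mem_subZ {g : Heisenberg p} : g ∈ subZ p ↔ g.1 = 0 ∧ g.2.1 = 0 := Iff.rfl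
@[simp] theorem mem_subM {m : ZMod p} {g : Heisenberg p} : g ∈ subM p m ↔ g.2.1 = m * g.1 := Iff.rfl
@[simp] theorem mem_subMi {g : Heisenberg p} : g ∈ subMi p ↔ g.1 = 0 := Iff.rfl
@[simp] theorem mem_subS {m c i : ZMod p} {hi : 2 * i = 1} {g : Heisenberg p} :
    g ∈ subS p m c i hi ↔ g.2.1 = m * g.1 ∧ g.2.2 = c * g.1 + m * g.1 * (g.1 - 1) * i := Iff.rfl
@[simp] theorem mem_subSi {c : ZMod p} {g : Heisenberg p} :
    g ∈ subSi p c ↔ g.1 = 0 ∧ g.2.2 = c * g.2.1 := Iff.rfl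

theorem cast_choose_two {i : ZMod p} (hi : 2 * i = 1) (n : ℕ) :
    ((n.choose 2 : ℕ) : ZMod p) = (n : ZMod p) * ((n : ZMod p) - 1) * i := by
  rcases n with _ | n
  · simp
  · have heven : 2 * (n+1).choose 2 = (n + 1) * n := by
      rw [Nat.choose_two_right, Nat.add_sub_cancel]
      refine Nat.mul_div_cancel' ?_
      rcases Nat.even_or_odd n with h | h
      · exact (h.mul_left (n+1)).two_dvd
      · have : Even (n+1) := by rcases h with ⟨k, hk⟩; exact ⟨k+1, by omega⟩
        exact (this.mul_right n).two_dvd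
    have h1 : (2 : ZMod p) * ((n+1).choose 2 : ℕ) = ((n:ZMod p) + 1) * (n : ZMod p) := by
      have := congrArg (Nat.cast : ℕ → ZMod p) heven
      push_cast at this
      exact_mod_cast this
    push_cast
    linear_combination i * h1 - (((n+1).choose 2 : ℕ) : ZMod p) * hi

theorem natCast_val_self [NeZero p] (x : ZMod p) : ((x.val : ℕ) : ZMod p) = x := by
  simp [ZMod.natCast_val, ZMod.cast_id]

theorem pow_val_formula [NeZero p] {i : ZMod p} (hi : 2 * i = 1) (g : Heisenberg p) (t : ZMod p) :
    g ^ t.val = (t * g.1, t * g.2.1, t * g.2.2 + t * (t - 1) * (g.1 * g.2.1) * i) := by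
  rw [pow_formula, cast_choose_two hi, natCast_val_self]
  exact (ext_iff3 _ _).mpr ⟨rfl, rfl, by ring⟩

/-- Constructor for Heisenberg elements. -/
def ctr (a b c : ZMod p) : Heisenberg p := (a, b, c)

@[simp] theorem ctr_fst (a b c : ZMod p) : (ctr a b c).1 = a := rfl
@[simp] theorem ctr_snd (a b c : ZMod p) : (ctr a b c).2.1 = b := rfl
@[simp] theorem ctr_trd (a b c : ZMod p) : (ctr a b c).2.2 = c := rfl

theorem eq_mul_central (u x : Heisenberg p) (h1 : u.1 = x.1) (h2 : u.2.1 = x.2.1) :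
    x = u * ctr 0 0 (x.2.2 - u.2.2) := by
  rw [ext_iff3, mul_def]
  refine ⟨by simp [h1], by simp [h2], by simp⟩

theorem central_all [Fact p.Prime] {i : ZMod p} (hi : 2 * i = 1) {H : Subgroup (Heisenberg p)}
    {d : ZMod p} (hd : ctr 0 0 d ∈ H) (hd0 : d ≠ 0)
    (w : ZMod p) : ctr (p := p) 0 0 w ∈ H := by
  have h := H.pow_mem hd (w * d⁻¹).val
  rwa [pow_val_formula hi, show (((w * d⁻¹ * (ctr (p:=p) 0 0 d).1, w * d⁻¹ * (ctr (p:=p) 0 0 d).2.1,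
      w * d⁻¹ * (ctr (p:=p) 0 0 d).2.2 + w * d⁻¹ * (w * d⁻¹ - 1) * ((ctr (p:=p) 0 0 d).1 * (ctr (p:=p) 0 0 d).2.1) * i)) : Heisenberg p)
      = ctr 0 0 w by
    refine (ext_iff3 _ _).mpr ?_
    refine ⟨by simp, by simp, ?_⟩
    simp only [ctr_fst, ctr_snd, ctr_trd]
    field_simp; simp] at h
@[simp] theorem one_def' : (1 : Heisenberg p) = ctr 0 0 0 := rfl

theorem mem_of_eq {H K : Subgroup (Heisenberg p)} (h : H = K) {x : Heisenberg p}
    (hx : x ∈ H) : x ∈ K := h ▸ hx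

/-- Index type enumerating the subgroups of the Heisenberg group. -/
def Idx (p : ℕ) : Type :=
  (Unit ⊕ Unit ⊕ Unit) ⊕ (Option (ZMod p)) ⊕ (Option (ZMod p) × ZMod p)

def toSub (p : ℕ) (i : ZMod p) (hi : 2 * i = 1) : Idx p → Subgroup (Heisenberg p)
  | Sum.inl (Sum.inl _) => ⊥
  | Sum.inl (Sum.inr (Sum.inl _)) => subZ p
  | Sum.inl (Sum.inr (Sum.inr _)) => ⊤
  | Sum.inr (Sum.inl (Option.some m)) => subM p m
  | Sum.inr (Sum.inl Option.none) => subMi p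
  | Sum.inr (Sum.inr (Option.some m, c)) => subS p m c i hi
  | Sum.inr (Sum.inr (Option.none, c)) => subSi p c

theorem toSub_inj [Fact p.Prime] {i : ZMod p} (hi : 2 * i = 1) :
    Function.Injective (toSub p i hi) := by
  intro a b h
  rcases a with (⟨⟩ | ⟨⟩ | ⟨⟩) | ((_ | m) | ⟨_ | m, c⟩) <;>
    rcases b with (⟨⟩ | ⟨⟩ | ⟨⟩) | ((_ | m') | ⟨_ | m', c'⟩) <;>
    simp only [toSub] at h <;>
  first
  | rfl
  | (have t := SetLike.ext_iff.mp h (ctr 0 0 1); simp at t; done)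
  | (have t := SetLike.ext_iff.mp h (ctr 1 0 0); simp at t; done)
  | (have t := SetLike.ext_iff.mp h (ctr 0 1 0); simp at t; done)
  | (have t := SetLike.ext_iff.mp h (ctr 1 m 0); simp at t; done)
  | (have t := SetLike.ext_iff.mp h (ctr 1 m' 0); simp at t; done)
  | (have t := SetLike.ext_iff.mp h (ctr 1 m c); simp at t; done)
  | (have t := SetLike.ext_iff.mp h (ctr 1 m' c'); simp at t; done)
  | (have t := SetLike.ext_iff.mp h (ctr 0 1 c); simp at t; done)
  | (have t := SetLike.ext_iff.mp h (ctr 0 1 c'); simp at t; done)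
  | (have t := SetLike.ext_iff.mp h (ctr 1 m 0); simp at t; subst t; rfl)
  | (have t := SetLike.ext_iff.mp h (ctr 0 1 c); simp at t; subst t; rfl)
  | (have t := SetLike.ext_iff.mp h (ctr 1 m c); simp at t;
     obtain ⟨t1, t2⟩ := t; subst t1; subst t2; rfl)
theorem pow_val_fst [NeZero p] {i : ZMod p} (hi : 2 * i = 1) (g : Heisenberg p) (t : ZMod p) :
    (g ^ t.val).1 = t * g.1 := by rw [pow_val_formula hi]

theorem pow_val_snd [NeZero p] {i : ZMod p} (hi : 2 * i = 1) (g : Heisenberg p) (t : ZMod p) :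
    (g ^ t.val).2.1 = t * g.2.1 := by rw [pow_val_formula hi]

theorem pow_val_trd [NeZero p] {i : ZMod p} (hi : 2 * i = 1) (g : Heisenberg p) (t : ZMod p) :
    (g ^ t.val).2.2 = t * g.2.2 + t * (t - 1) * (g.1 * g.2.1) * i := by
  rw [pow_val_formula hi]

theorem mem_of_central {H : Subgroup (Heisenberg p)} (hZ : ∀ w, ctr (p := p) 0 0 w ∈ H)
    {u x : Heisenberg p} (hu : u ∈ H) (h1 : u.1 = x.1) (h2 : u.2.1 = x.2.1) : x ∈ H := by
  rw [eq_mul_central u x h1 h2]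
  exact H.mul_mem hu (hZ _)

theorem inv_mul_eq_central (u x : Heisenberg p) (h1 : u.1 = x.1) (h2 : u.2.1 = x.2.1) :
    u⁻¹ * x = ctr 0 0 (x.2.2 - u.2.2) := by
  rw [ext_iff3]
  simp only [mul_def]
  simp only [inv_def, ctr_fst, ctr_snd, ctr_trd]
  refine ⟨by simp [h1], by simp [h2], ?_⟩
  show -u.2.2 + u.1 * u.2.1 + x.2.2 + -u.1 * x.2.1 = x.2.2 - u.2.2
  linear_combination u.1 * h2

theorem diff_central {H : Subgroup (Heisenberg p)} {u x : Heisenberg p} (hu : u ∈ H)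
    (hx : x ∈ H) (h1 : u.1 = x.1) (h2 : u.2.1 = x.2.1) :
    ctr (p := p) 0 0 (x.2.2 - u.2.2) ∈ H := by
  rw [← inv_mul_eq_central u x h1 h2]
  exact H.mul_mem (H.inv_mem hu) hx

theorem toSub_surj [Fact p.Prime] {i : ZMod p} (hi : 2 * i = 1) :
    Function.Surjective (toSub p i hi) := by
  intro H
  by_cases hA : ∀ g ∈ H, g.1 = 0 ∧ g.2.1 = 0
  · by_cases hB : ∀ g ∈ H, g = 1
    · exact ⟨Sum.inl (Sum.inl ()), ((Subgroup.eq_bot_iff_forall H).mpr hB).symm⟩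
    · push_neg at hB
      obtain ⟨g, hgH, hg1⟩ := hB
      obtain ⟨h1, h2⟩ := hA g hgH
      have hd0 : g.2.2 ≠ 0 := fun h3 => hg1 (by simp [h1, h2, h3])
      have hgc : ctr 0 0 g.2.2 ∈ H := by
        have he : g = ctr 0 0 g.2.2 := by simp [h1, h2]
        exact he ▸ hgH
      refine ⟨Sum.inl (Sum.inr (Sum.inl ())), ?_⟩
      simp only [toSub]
      ext x
      simp only [mem_subZ]
      constructor
      · rintro ⟨hx1, hx2⟩
        have he : x = ctr 0 0 x.2.2 := by simp [hx1, hx2]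
        rw [he]
        exact central_all hi hgc hd0 _
      · intro hx; exact hA x hx
  · push_neg at hA
    obtain ⟨g, hgH, hg⟩ := hA
    by_cases hI : ∃ k ∈ H, g.1 * k.2.1 ≠ g.2.1 * k.1
    · -- H = ⊤
      obtain ⟨k, hkH, hdet⟩ := hI
      have hd0 : g.1 * k.2.1 - g.2.1 * k.1 ≠ 0 := sub_ne_zero.mpr hdet
      have hd1 : (g.1 * k.2.1 - g.2.1 * k.1) * (g.1 * k.2.1 - g.2.1 * k.1)⁻¹ = 1 :=
        mul_inv_cancel₀ hd0
      have hcomm : ctr 0 0 (g.1 * k.2.1 - g.2.1 * k.1) ∈ H := by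
        have hm : g * k * g⁻¹ * k⁻¹ ∈ H :=
          H.mul_mem (H.mul_mem (H.mul_mem hgH hkH) (H.inv_mem hgH)) (H.inv_mem hkH)
        have he : g * k * g⁻¹ * k⁻¹ = ctr 0 0 (g.1 * k.2.1 - g.2.1 * k.1) := by
          rw [ext_iff3]
          rw [mul_def, mul_def, mul_def, inv_def, inv_def]
          simp only [ctr_fst, ctr_snd, ctr_trd]
          refine ⟨by ring, by ring, by ring⟩
        exact he ▸ hm
      have hZ : ∀ w, ctr (p := p) 0 0 w ∈ H := central_all hi hcomm hd0
      refine ⟨Sum.inl (Sum.inr (Sum.inr ())), ?_⟩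
      simp only [toSub]
      refine ((Subgroup.eq_top_iff' H).mpr fun x => ?_).symm
      have hu : g ^ (((x.1 * k.2.1 - x.2.1 * k.1) * (g.1 * k.2.1 - g.2.1 * k.1)⁻¹).val) *
          k ^ (((x.2.1 * g.1 - x.1 * g.2.1) * (g.1 * k.2.1 - g.2.1 * k.1)⁻¹).val) ∈ H :=
        H.mul_mem (H.pow_mem hgH _) (H.pow_mem hkH _)
      refine mem_of_central hZ hu ?_ ?_
      · show _ + _ = x.1
        rw [pow_val_fst hi, pow_val_fst hi]
        linear_combination x.1 * hd1
      · show _ + _ = x.2.1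
        rw [pow_val_snd hi, pow_val_snd hi]
        linear_combination x.2.1 * hd1
    · push_neg at hI
      by_cases hC : ∀ w : ZMod p, ctr (p := p) 0 0 w ∈ H → w = 0
      · -- H is a small subgroup
        by_cases ha : g.1 = 0
        · have hb : g.2.1 ≠ 0 := fun hb => hg ha hb
          have hb1 : g.2.1 * g.2.1⁻¹ = 1 := mul_inv_cancel₀ hb
          refine ⟨Sum.inr (Sum.inr (Option.none, g.2.1⁻¹ * g.2.2)), ?_⟩
          simp only [toSub]
          ext x
          simp only [mem_subSi]
          constructor
          · rintro ⟨hx1, hx3⟩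
            have hu := H.pow_mem hgH (x.2.1 * g.2.1⁻¹).val
            have he : x = g ^ (x.2.1 * g.2.1⁻¹).val := by
              rw [ext_iff3, pow_val_fst hi, pow_val_snd hi, pow_val_trd hi]
              refine ⟨by rw [hx1, ha]; ring, by linear_combination (-x.2.1) * hb1, ?_⟩
              rw [hx3, ha]
              ring
            rw [he]; exact hu
          · intro hx
            have hx1 : x.1 = 0 := by
              have hq := hI x hx
              rw [ha, zero_mul] at hq
              rcases mul_eq_zero.mp hq.symm with h' | h'
              · exact absurd h' hb
              · exact h'
            have hu := H.pow_mem hgH (x.2.1 * g.2.1⁻¹).val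
            have hc := hC _ (diff_central hu hx
              (by rw [pow_val_fst hi, hx1, ha]; ring)
              (by rw [pow_val_snd hi]; linear_combination x.2.1 * hb1))
            rw [pow_val_trd hi, ha] at hc
            refine ⟨hx1, ?_⟩
            linear_combination hc
        · have ha1 : g.1 * g.1⁻¹ = 1 := mul_inv_cancel₀ ha
          refine ⟨Sum.inr (Sum.inr (Option.some (g.2.1 * g.1⁻¹),
            g.2.2 * g.1⁻¹ + g.2.1 * g.1⁻¹ * (1 - g.1) * i)), ?_⟩
          simp only [toSub]
          ext x
          simp only [mem_subS]
          constructor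
          · rintro ⟨hx2, hx3⟩
            have hu := H.pow_mem hgH (x.1 * g.1⁻¹).val
            have he : x = g ^ (x.1 * g.1⁻¹).val := by
              rw [ext_iff3, pow_val_fst hi, pow_val_snd hi, pow_val_trd hi]
              refine ⟨by linear_combination (-x.1) * ha1,
                by rw [hx2]; ring, ?_⟩
              rw [hx3]
              field_simp
              ring
            rw [he]; exact hu
          · intro hx
            have hx2 : x.2.1 = g.2.1 * g.1⁻¹ * x.1 := by
              have hq := hI x hx
              field_simp
              linear_combination hq
            have hu := H.pow_mem hgH (x.1 * g.1⁻¹).val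
            have hc := hC _ (diff_central hu hx
              (by rw [pow_val_fst hi]; linear_combination x.1 * ha1)
              (by rw [pow_val_snd hi, hx2]; ring))
            rw [pow_val_trd hi] at hc
            refine ⟨hx2, ?_⟩
            have hx3 : x.2.2 = x.1 * g.1⁻¹ * g.2.2 +
                x.1 * g.1⁻¹ * (x.1 * g.1⁻¹ - 1) * (g.1 * g.2.1) * i := by
              linear_combination hc
            rw [hx3]
            field_simp
            ring
      · -- H is a maximal subgroup
        push_neg at hC
        obtain ⟨w₀, hw0H, hw00⟩ := hC
        have hZ : ∀ w, ctr (p := p) 0 0 w ∈ H := central_all hi hw0H hw00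
        by_cases ha : g.1 = 0
        · have hb : g.2.1 ≠ 0 := fun hb => hg ha hb
          have hb1 : g.2.1 * g.2.1⁻¹ = 1 := mul_inv_cancel₀ hb
          refine ⟨Sum.inr (Sum.inl Option.none), ?_⟩
          simp only [toSub]
          ext x
          simp only [mem_subMi]
          constructor
          · intro hx1
            refine mem_of_central hZ (H.pow_mem hgH (x.2.1 * g.2.1⁻¹).val) ?_ ?_
            · rw [pow_val_fst hi, hx1, ha]; ring
            · rw [pow_val_snd hi]; linear_combination x.2.1 * hb1
          · intro hx
            have hq := hI x hx
            rw [ha, zero_mul] at hq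
            rcases mul_eq_zero.mp hq.symm with h' | h'
            · exact absurd h' hb
            · exact h'
        · have ha1 : g.1 * g.1⁻¹ = 1 := mul_inv_cancel₀ ha
          refine ⟨Sum.inr (Sum.inl (Option.some (g.2.1 * g.1⁻¹))), ?_⟩
          simp only [toSub]
          ext x
          simp only [mem_subM]
          constructor
          · intro hx2
            refine mem_of_central hZ (H.pow_mem hgH (x.1 * g.1⁻¹).val) ?_ ?_
            · rw [pow_val_fst hi]; linear_combination x.1 * ha1
            · rw [pow_val_snd hi, hx2]; ring
          · intro hx
            have hq := hI x hx
            field_simp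
            linear_combination hq
theorem card_idx [Fact p.Prime] : Nat.card (Idx p) = p ^ 2 + 2 * p + 4 := by
  have hz : Nat.card (ZMod p) = p := Nat.card_zmod p
  have ho : Nat.card (Option (ZMod p)) = p + 1 := by
    simp [Nat.card_eq_fintype_card, ZMod.card]
  simp only [Idx, Nat.card_sum, Nat.card_prod, Nat.card_unique, hz, ho]
  ring

end HeisAux

/-- For an odd prime `p`, the Heisenberg group of order `p^3` has exactly
`p^2 + 2p + 4` subgroups. -/
theorem heisenberg_numSubgroups (p : ℕ) (hp : p.Prime) (hodd : Odd p) :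
    numSubgroups (Heisenberg p) = p ^ 2 + 2 * p + 4 := by
  haveI : Fact p.Prime := ⟨hp⟩
  have h2 : (2 : ZMod p) ≠ 0 := by
    intro h
    have hd : p ∣ 2 := (ZMod.natCast_eq_zero_iff 2 p).mp (by exact_mod_cast h)
    have hp2 : p = 2 := (Nat.prime_dvd_prime_iff_eq hp Nat.prime_two).mp hd
    rw [hp2] at hodd
    exact (by decide : ¬ Odd 2) hodd
  have hi : (2 : ZMod p) * (2 : ZMod p)⁻¹ = 1 := mul_inv_cancel₀ h2
  rw [numSubgroups, ← Nat.card_eq_of_bijective _ ⟨HeisAux.toSub_inj hi, HeisAux.toSub_surj hi⟩,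
    HeisAux.card_idx]
end

section
/- For the modular p-group M_{p^n} (n ≥ 4 if p = 2, n ≥ 3 if p odd), the total number of subgroups is (n-1)(p+1) + 2. -/
open Pointwise

section MGAux
open Subgroup
set_option linter.unusedSectionVars false

structure MGHyp (p n : ℕ) (G : Type) [Group G] (x y : G) : Prop where
  hp : p.Prime
  hn : 3 ≤ n
  hn2 : p = 2 → 4 ≤ n
  hcard : Nat.card G = p ^ n
  hx : orderOf x = p ^ (n - 1)
  hy : y ^ p = 1
  hconj : y * x * y⁻¹ = x ^ (p ^ (n - 2) + 1)
  hgen : Subgroup.closure ({x, y} : Set G) = ⊤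

namespace MGHyp
variable {p n : ℕ} {G : Type} [Group G] {x y : G} (S : MGHyp p n G x y)
include S

lemma hp1 : 1 < p := S.hp.one_lt

lemma finiteG : Finite G := by
  exact Nat.finite_of_card_ne_zero (by rw [S.hcard]; exact (pow_pos S.hp.pos n).ne')

lemma hx1 : x ^ (p ^ (n-1)) = 1 := by rw [← S.hx]; exact pow_orderOf_eq_one x

lemma hxpow_eq_one {m : ℕ} (h : p ^ (n-1) ∣ m) : x ^ m = 1 :=
  orderOf_dvd_iff_pow_eq_one.mp (S.hx ▸ h)

lemma hq2 : x ^ (p ^ (n-2) * p ^ (n-2)) = 1 := by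
  apply S.hxpow_eq_one
  rw [← pow_add]
  exact pow_dvd_pow p (by have := S.hn; omega)

lemma hyx (a : ℕ) : y * x ^ a = x ^ (a * (p ^ (n-2) + 1)) * y := by
  have h := conj_pow (i := a) (a := y) (b := x)
  rw [S.hconj, ← pow_mul] at h
  have h2 := congrArg (· * y) h
  simp only [mul_assoc, inv_mul_cancel, mul_one] at h2
  rw [mul_comm (p ^ (n-2) + 1) a] at h2
  exact h2.symm

lemma hswap (b a : ℕ) : y ^ b * x ^ a = x ^ (a * (p ^ (n-2) + 1) ^ b) * y ^ b := by
  induction b generalizing a with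
  | zero => simp
  | succ b ih =>
    rw [pow_succ, mul_assoc, S.hyx, ← mul_assoc, ih, mul_assoc, ← pow_succ]
    congr 1
    rw [pow_succ]
    ring

lemma hbin (m : ℕ) : ∃ j, (p ^ (n-2) + 1) ^ m = 1 + m * p ^ (n-2) + p ^ (n-2) * p ^ (n-2) * j := by
  induction m with
  | zero => exact ⟨0, by ring⟩
  | succ m ih =>
    obtain ⟨j, hj⟩ := ih
    exact ⟨m + p ^ (n-2) * j + j, by rw [pow_succ, hj]; ring⟩

lemma hswap' (b a : ℕ) : y ^ b * x ^ a = x ^ (a + a * b * p ^ (n-2)) * y ^ b := by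
  obtain ⟨j, hj⟩ := S.hbin b
  rw [S.hswap b a, hj]
  congr 1
  have : a * (1 + b * p ^ (n-2) + p ^ (n-2) * p ^ (n-2) * j)
      = (a + a * b * p ^ (n-2)) + (p ^ (n-2) * p ^ (n-2)) * (a * j) := by ring
  rw [this, pow_add, pow_mul, S.hq2, one_pow, mul_one]


lemma hpow (c m : ℕ) : (x ^ c * y) ^ m = x ^ (c * m + p ^ (n-2) * c * m.choose 2) * y ^ m := by
  induction m with
  | zero => simp
  | succ m ih =>
    have hch : (m+1).choose 2 = m.choose 2 + m := by
      rw [Nat.choose_succ_succ m 1, Nat.choose_one_right]; norm_num [Nat.add_comm]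
    rw [pow_succ, ih, mul_assoc, ← mul_assoc (y ^ m), S.hswap' m c,
      mul_assoc _ (y ^ m) y, ← pow_succ, ← mul_assoc, ← pow_add, hch]
    congr 1
    ring

lemma hsurj (g : G) : ∃ a b : ℕ, b < p ∧ g = x ^ a * y ^ b := by
  have key : ∀ h : G, ∃ a b : ℕ, h = x ^ a * y ^ b := by
    let T : Subgroup G :=
      { carrier := {h | ∃ a b : ℕ, h = x ^ a * y ^ b}
        one_mem' := ⟨0, 0, by simp⟩
        mul_mem' := by
          rintro g1 g2 ⟨a, b, rfl⟩ ⟨a2, b2, rfl⟩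
          refine ⟨a + (a2 + a2 * b * p ^ (n-2)), b + b2, ?_⟩
          rw [mul_assoc, ← mul_assoc (y ^ b), S.hswap' b a2, pow_add, pow_add]
          group
        inv_mem' := by
          rintro g1 ⟨a, b, rfl⟩
          refine ⟨a * (p ^ (n-1) - 1) + a * (p ^ (n-1) - 1) * (b * (p - 1)) * p ^ (n-2),
            b * (p - 1), ?_⟩
          have h1 : x ^ a * x ^ (a * (p ^ (n-1) - 1)) = 1 := by
            rw [← pow_add]
            apply S.hxpow_eq_one
            have : a + a * (p ^ (n-1) - 1) = a * p ^ (n-1) := by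
              have h3 : 1 ≤ p ^ (n-1) := Nat.one_le_pow _ _ S.hp.pos
              cases' Nat.exists_eq_add_of_le h3 with r hr
              rw [hr]
              have h4 : 1 + r - 1 = r := by omega
              rw [h4]; ring
            rw [this]
            exact Dvd.dvd.mul_left dvd_rfl a
          have h2 : y ^ b * y ^ (b * (p - 1)) = 1 := by
            rw [← pow_add]
            have : b + b * (p - 1) = p * b := by
              have h3 : 1 ≤ p := S.hp.pos
              cases' Nat.exists_eq_add_of_le h3 with r hr
              rw [hr]
              have h4 : 1 + r - 1 = r := by omega
              rw [h4]; ring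
            rw [this, pow_mul, S.hy, one_pow]
          rw [← S.hswap' (b * (p-1)) (a * (p ^ (n-1) - 1))]
          symm
          apply eq_inv_of_mul_eq_one_right
          have h1' : x ^ (a * (p ^ (n-1) - 1)) * x ^ a = 1 := by
            rw [← pow_add, add_comm, pow_add]; exact h1
          have h2' : y ^ (b * (p - 1)) * y ^ b = 1 := by
            rw [← pow_add, add_comm, pow_add]; exact h2
          rw [mul_assoc, ← mul_assoc (y ^ b), h2, one_mul, h1] }
    have hT : ∀ h, h ∈ T ↔ ∃ a b : ℕ, h = x ^ a * y ^ b := fun h => Iff.rfl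
    intro h
    rw [← hT]
    have : (⊤ : Subgroup G) ≤ T := by
      rw [← S.hgen]
      apply Subgroup.closure_le T |>.mpr
      rintro g (rfl | rfl)
      · exact ⟨1, 0, by simp⟩
      · exact ⟨0, 1, by simp⟩
    exact this (Subgroup.mem_top h)
  obtain ⟨a, b, rfl⟩ := key g
  refine ⟨a, b % p, Nat.mod_lt _ S.hp.pos, ?_⟩
  congr 1
  conv_lhs => rw [← Nat.div_add_mod b p]
  rw [pow_add, pow_mul, S.hy, one_pow, one_mul]


lemma hcard_zpx : Nat.card (zpowers x) = p ^ (n-1) := by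
  rw [Nat.card_zpowers, S.hx]

lemma hyN : y ∉ zpowers x := by
  intro hmem
  have : Finite G := S.finiteG
  have htop : (⊤ : Subgroup G) ≤ zpowers x := by
    rw [← S.hgen]
    refine (Subgroup.closure_le _).mpr ?_
    intro g hg
    simp only [Set.mem_insert_iff, Set.mem_singleton_iff] at hg
    rcases hg with h | h
    · rw [h]; exact mem_zpowers x
    · rw [h]; exact hmem
  have hle := Subgroup.card_le_of_le htop
  rw [Subgroup.card_top, S.hcard, S.hcard_zpx] at hle
  have := S.hn
  exact absurd hle (by
    have : p ^ (n-1) < p ^ n := Nat.pow_lt_pow_right S.hp1 (by omega)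
    omega)

lemma hyne : y ≠ 1 := by
  intro h
  have hc := S.hconj
  rw [h, one_mul, inv_one, mul_one, pow_succ] at hc
  have hq : x ^ (p ^ (n-2)) = 1 := by
    have h2 : x ^ (p ^ (n-2)) * x = 1 * x := by rw [one_mul]; exact hc.symm
    exact mul_right_cancel h2
  have hdvd : p ^ (n-1) ∣ p ^ (n-2) := S.hx ▸ orderOf_dvd_of_pow_eq_one hq
  have := (Nat.pow_dvd_pow_iff_le_right S.hp1).mp hdvd
  have := S.hn
  omega

lemma hyord : orderOf y = p := by
  have hd : orderOf y ∣ p := orderOf_dvd_of_pow_eq_one S.hy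
  rcases (Nat.dvd_prime S.hp).mp hd with h | h
  · exact absurd (orderOf_eq_one_iff.mp h) S.hyne
  · exact h

lemma hyZ' {b : ℕ} (hb : b < p) (h : y ^ b ∈ zpowers x) : b = 0 := by
  by_contra hb0
  have hcop : Nat.Coprime b (orderOf y) := by
    rw [S.hyord]
    exact Nat.Coprime.symm (S.hp.coprime_iff_not_dvd.mpr (Nat.not_dvd_of_pos_of_lt (by omega) hb))
  obtain ⟨m, hm⟩ := exists_pow_eq_self_of_coprime hcop
  exact S.hyN (hm ▸ Subgroup.pow_mem _ h m)

lemma hmemz (m : ℤ) {k : ℕ} (hk : k ≤ n-1) :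
    x ^ m ∈ zpowers (x ^ p ^ k) ↔ ((p : ℤ) ^ k ∣ m) := by
  constructor
  · rintro ⟨j, hj⟩
    have hj' : (x ^ p ^ k) ^ j = x ^ m := hj
    have hx2 : x ^ ((p : ℤ) ^ k * j) = x ^ m := by
      rw [← hj', ← zpow_natCast x (p ^ k), ← zpow_mul]
      norm_num
    have h1 : x ^ ((p : ℤ) ^ k * j - m) = 1 := by
      rw [zpow_sub, hx2]
      simp
    have h2 : ((p : ℤ) ^ (n-1)) ∣ ((p : ℤ) ^ k * j - m) := by
      have := orderOf_dvd_iff_zpow_eq_one.mpr h1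
      rwa [S.hx, Nat.cast_pow] at this
    have h3 : ((p : ℤ) ^ k) ∣ ((p : ℤ) ^ k * j - m) :=
      dvd_trans (pow_dvd_pow _ hk) h2
    have h4 : ((p : ℤ) ^ k) ∣ (p : ℤ) ^ k * j := Dvd.intro j rfl
    simpa using dvd_sub h4 h3
  · rintro ⟨j, rfl⟩
    refine ⟨j, ?_⟩
    show (x ^ p ^ k) ^ j = _
    rw [← zpow_natCast x (p ^ k), ← zpow_mul]
    norm_num

lemma hmemn (m : ℕ) {k : ℕ} (hk : k ≤ n-1) :
    x ^ m ∈ zpowers (x ^ p ^ k) ↔ (p ^ k ∣ m) := by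
  rw [← zpow_natCast x m, S.hmemz _ hk]
  constructor
  · intro h; exact_mod_cast h
  · intro h; exact_mod_cast h

lemma hcard_zp {k : ℕ} (hk : k ≤ n-1) :
    Nat.card (zpowers (x ^ p ^ k)) = p ^ (n-1-k) := by
  have : Finite G := S.finiteG
  rw [Nat.card_zpowers, orderOf_pow' x (pow_ne_zero k S.hp.pos.ne'), S.hx,
    Nat.gcd_eq_right (pow_dvd_pow p hk), Nat.pow_div hk S.hp.pos]

lemma hNcyc {H : Subgroup G} (h : H ≤ zpowers x) :
    ∃ k, k ≤ n-1 ∧ H = zpowers (x ^ p ^ k) := by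
  have : Finite G := S.finiteG
  have hdvd : Nat.card H ∣ p ^ (n-1) := by
    have := Subgroup.card_dvd_of_le h
    rwa [S.hcard_zpx] at this
  obtain ⟨j, hjle, hcardH⟩ := (Nat.dvd_prime_pow S.hp).mp hdvd
  refine ⟨n-1-j, by omega, ?_⟩
  have hle : H ≤ zpowers (x ^ p ^ (n-1-j)) := by
    intro g hg
    obtain ⟨m, hm⟩ := h hg
    have hg1 : g ^ (p ^ j) = 1 := by
      have h1 : (⟨g, hg⟩ : H) ^ (p ^ j) = 1 := by
        rw [← hcardH]
        exact pow_card_eq_one'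
      have := congrArg (Subtype.val) h1
      simpa using this
    rw [← hm] at hg1 ⊢
    rw [S.hmemz _ (by omega)]
    rw [← zpow_natCast (x ^ m), ← zpow_mul] at hg1
    have h2 : ((p:ℤ) ^ (n-1)) ∣ m * (p ^ j : ℕ) := by
      have := orderOf_dvd_iff_zpow_eq_one.mpr hg1
      rwa [S.hx, Nat.cast_pow] at this
    have h3 : ((p:ℤ) ^ (n-1-j) * (p:ℤ) ^ j) ∣ m * (p:ℤ) ^ j := by
      rw [← pow_add]
      have he : n-1-j+j = n-1 := by omega
      rw [he]
      push_cast at h2 ⊢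
      exact h2
    have hpj : ((p:ℤ) ^ j) ≠ 0 := pow_ne_zero _ (by exact_mod_cast S.hp.pos.ne')
    exact (mul_dvd_mul_iff_right hpj).mp h3
  apply Subgroup.eq_of_le_of_card_ge hle
  rw [S.hcard_zp (by omega), hcardH]
  have : n-1-(n-1-j) = j := by omega
  rw [this]

lemma hD : ∃ u, p + p ^ (n-2) * Nat.choose p 2 = p * u ∧ ¬ (p ∣ u) := by
  have hn := S.hn
  by_cases hp2 : p = 2
  · have hn4 := S.hn2 hp2
    subst hp2
    refine ⟨1 + 2 ^ (n-3), ?_, ?_⟩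
    · have h1 : n - 2 = n - 3 + 1 := by omega
      rw [h1, Nat.choose_self, pow_succ]
      ring
    · intro hdvd
      have h2 : (2:ℕ) ∣ 2 ^ (n-3) := dvd_pow_self 2 (by omega)
      obtain ⟨r, hr⟩ := h2
      omega
  · obtain ⟨s, hs⟩ := S.hp.odd_of_ne_two hp2
    have hchoose : p.choose 2 = p * s := by
      rw [Nat.choose_two_right, hs]
      have h1 : (2 * s + 1) * (2 * s + 1 - 1) = 2 * ((2*s+1) * s) := by
        have : 2 * s + 1 - 1 = 2 * s := by omega
        rw [this]; ring
      rw [h1, Nat.mul_div_cancel_left _ (by norm_num)]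
    refine ⟨1 + p ^ (n-2) * s, by rw [hchoose]; ring, ?_⟩
    intro hdvd
    have h2 : p ∣ p ^ (n-2) * s := Dvd.dvd.mul_right (dvd_pow_self p (by omega)) s
    have h3 : p ∣ 1 := by
      have := Nat.dvd_sub hdvd h2
      simpa using this
    exact absurd (Nat.dvd_one.mp h3) (by have := S.hp1; omega)


lemma hpowgen (a b : ℕ) : ∀ m : ℕ, ∃ s : ℕ, (x ^ a * y ^ b) ^ m = x ^ s * y ^ (b * m) := by
  intro m
  induction m with
  | zero => exact ⟨0, by simp⟩
  | succ m ih =>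
    obtain ⟨s, hs⟩ := ih
    refine ⟨s + (a + a * (b * m) * p ^ (n-2)), ?_⟩
    rw [pow_succ, hs, mul_assoc, ← mul_assoc (y ^ (b * m)), S.hswap' (b * m) a,
      mul_assoc (x ^ (a + a * (b * m) * p ^ (n-2))), ← pow_add, ← mul_assoc, ← pow_add,
      show b * m + b = b * (m + 1) by ring]

lemma hwx {k c : ℕ} (hk1 : 1 ≤ k) : (x ^ c * y) * x ^ p ^ k = x ^ p ^ k * (x ^ c * y) := by
  have hn3 := S.hn
  have h2 := S.hswap' 1 (p ^ k)
  rw [pow_one] at h2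
  have h1 : y * x ^ p ^ k = x ^ p ^ k * y := by
    rw [h2, pow_add, S.hxpow_eq_one (show p ^ (n-1) ∣ p ^ k * 1 * p ^ (n-2) by
      rw [mul_one, ← pow_add]; exact pow_dvd_pow p (by omega)), mul_one]
  rw [mul_assoc, h1, ← mul_assoc, ← pow_add, Nat.add_comm, pow_add, mul_assoc]

lemma memB {k c : ℕ} (hk1 : 1 ≤ k) (hk : k ≤ n-1) (hc : p ^ (k-1) ∣ c) {g : G}
    (hg : g ∈ zpowers (x ^ p ^ k) ⊔ zpowers (x ^ c * y)) :
    ∃ (j : ℤ) (b : ℕ), b < p ∧ g = x ^ j * y ^ b ∧ ((p : ℤ) ^ k) ∣ (j - c * b) := by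
  have hn3 := S.hn
  have hcomm : Commute (x ^ p ^ k) (x ^ c * y) := (S.hwx hk1).symm
  let T : Subgroup G :=
    { carrier := {h | ∃ i b : ℤ, h = (x ^ p ^ k) ^ i * (x ^ c * y) ^ b}
      one_mem' := ⟨0, 0, by simp⟩
      mul_mem' := by
        rintro h1 h2 ⟨i, b, rfl⟩ ⟨i2, b2, rfl⟩
        refine ⟨i + i2, b + b2, ?_⟩
        have hc2 : (x ^ c * y) ^ b * (x ^ p ^ k) ^ i2
            = (x ^ p ^ k) ^ i2 * (x ^ c * y) ^ b := ((hcomm.zpow_zpow i2 b).symm).eq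
        rw [zpow_add, zpow_add]
        calc (x ^ p ^ k) ^ i * (x ^ c * y) ^ b * ((x ^ p ^ k) ^ i2 * (x ^ c * y) ^ b2)
            = (x ^ p ^ k) ^ i * ((x ^ c * y) ^ b * (x ^ p ^ k) ^ i2) * (x ^ c * y) ^ b2 := by
              group
          _ = (x ^ p ^ k) ^ i * ((x ^ p ^ k) ^ i2 * (x ^ c * y) ^ b) * (x ^ c * y) ^ b2 := by
              rw [hc2]
          _ = (x ^ p ^ k) ^ i * (x ^ p ^ k) ^ i2 * ((x ^ c * y) ^ b * (x ^ c * y) ^ b2) := by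
              group
      inv_mem' := by
        rintro h ⟨i, b, rfl⟩
        refine ⟨-i, -b, ?_⟩
        rw [mul_inv_rev, ← zpow_neg, ← zpow_neg]
        exact (hcomm.zpow_zpow (-i) (-b)).symm.eq }
  have hsup : zpowers (x ^ p ^ k) ⊔ zpowers (x ^ c * y) ≤ T := by
    apply sup_le
    · intro h hh
      obtain ⟨i, hi⟩ := hh
      exact ⟨i, 0, by rw [← hi]; simp⟩
    · intro h hh
      obtain ⟨b, hb⟩ := hh
      exact ⟨0, b, by rw [← hb]; simp⟩
  obtain ⟨i, b, rfl⟩ := hsup hg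
  obtain ⟨u, hDu, hpu⟩ := S.hD
  obtain ⟨c1, rfl⟩ := hc
  have hppos : (0:ℤ) < (p:ℤ) := by exact_mod_cast S.hp.pos
  set m := b / (p:ℤ) with hm
  set r := b % (p:ℤ) with hrdef
  have hb : b = (p:ℤ) * m + r := (Int.mul_ediv_add_emod b p).symm
  have hr0 : 0 ≤ r := Int.emod_nonneg b hppos.ne'
  have hrp : r < (p:ℤ) := Int.emod_lt_of_pos b hppos
  set r' := r.toNat with hr'def
  have hr' : (r' : ℤ) = r := Int.toNat_of_nonneg hr0
  set c := p ^ (k-1) * c1 with hcdef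
  have hwp : (x ^ c * y) ^ (p:ℕ) = x ^ (c * (p + p ^ (n-2) * p.choose 2)) := by
    rw [S.hpow c p, S.hy, mul_one]
    congr 1
    ring
  have hgw : (x ^ c * y) ^ b
      = ((x ^ c * y) ^ (p:ℕ)) ^ m * (x ^ c * y) ^ r' := by
    conv_lhs => rw [hb]
    rw [zpow_add, zpow_mul, ← hr', zpow_natCast, zpow_natCast]
  refine ⟨(p : ℤ) ^ k * i + (c * (p + p ^ (n-2) * p.choose 2) : ℕ) * m
      + ((c * r' + p ^ (n-2) * c * r'.choose 2 : ℕ) : ℤ), r', ?_, ?_, ?_⟩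
  · have : (r' : ℤ) < (p : ℤ) := hr' ▸ hrp
    exact_mod_cast this
  · rw [hgw, hwp, S.hpow c r', ← mul_assoc, ← mul_assoc]
    congr 1
    rw [← zpow_natCast x (p ^ k), ← zpow_mul,
      ← zpow_natCast x (c * (p + p ^ (n-2) * p.choose 2)), ← zpow_mul,
      ← zpow_natCast x (c * r' + p ^ (n-2) * c * r'.choose 2), ← zpow_add, ← zpow_add]
    congr 1
  · have hd1 : (p : ℤ) ^ k ∣ (p : ℤ) ^ k * i := Dvd.intro i rfl
    have hd2n : p ^ k ∣ c * (p + p ^ (n-2) * p.choose 2) := by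
      rw [hDu, hcdef]
      have : p ^ (k-1) * c1 * (p * u) = p ^ (k-1) * p * (c1 * u) := by ring
      rw [this, ← pow_succ]
      have hkk : k - 1 + 1 = k := by omega
      rw [hkk]
      exact Dvd.intro _ rfl
    have hd2 : (p : ℤ) ^ k ∣ ((c * (p + p ^ (n-2) * p.choose 2) : ℕ) : ℤ) * m := by
      apply Dvd.dvd.mul_right
      have := Int.natCast_dvd_natCast.mpr hd2n
      push_cast at this ⊢
      exact this
    have hd3n : p ^ k ∣ p ^ (n-2) * c * r'.choose 2 := by
      rw [hcdef]
      have h1 : p ^ k ∣ p ^ (n-2) * p ^ (k-1) := by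
        rw [← pow_add]
        exact pow_dvd_pow p (by omega)
      have h2 : p ^ (n-2) * (p ^ (k-1) * c1) * r'.choose 2
          = (p ^ (n-2) * p ^ (k-1)) * (c1 * r'.choose 2) := by ring
      rw [h2]
      exact Dvd.dvd.mul_right h1 _
    have hd3 : (p : ℤ) ^ k ∣ ((p ^ (n-2) * c * r'.choose 2 : ℕ) : ℤ) := by
      have := Int.natCast_dvd_natCast.mpr hd3n
      push_cast at this ⊢
      exact this
    have heq : (p : ℤ) ^ k * i + ((c * (p + p ^ (n-2) * p.choose 2) : ℕ) : ℤ) * m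
        + ((c * r' + p ^ (n-2) * c * r'.choose 2 : ℕ) : ℤ) - (c : ℤ) * (r' : ℤ)
        = ((p : ℤ) ^ k * i + ((c * (p + p ^ (n-2) * p.choose 2) : ℕ) : ℤ) * m)
        + ((p ^ (n-2) * c * r'.choose 2 : ℕ) : ℤ) := by push_cast; ring
    rw [heq]
    exact dvd_add (dvd_add hd1 hd2) hd3


lemma hwnotN (c : ℕ) : x ^ c * y ∉ zpowers x := by
  intro h
  apply S.hyN
  have := mul_mem (inv_mem (Subgroup.pow_mem _ (mem_zpowers x) c)) h
  simpa using this

lemma B_inf {k c : ℕ} (hk1 : 1 ≤ k) (hk : k ≤ n-1) (hc : p ^ (k-1) ∣ c) :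
    (zpowers (x ^ p ^ k) ⊔ zpowers (x ^ c * y)) ⊓ zpowers x = zpowers (x ^ p ^ k) := by
  apply le_antisymm
  · rintro g ⟨hgB, hgN⟩
    obtain ⟨j, b, hbp, rfl, hdvd⟩ := S.memB hk1 hk hc hgB
    have hyb : y ^ b ∈ zpowers x := by
      have h2 : y ^ b = (x ^ j)⁻¹ * (x ^ j * y ^ b) := by group
      rw [h2]
      exact mul_mem (inv_mem (zpow_mem (mem_zpowers x) j)) hgN
    have hb0 : b = 0 := S.hyZ' hbp hyb
    subst hb0
    simp only [pow_zero, mul_one] at hdvd ⊢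
    rw [S.hmemz j hk]
    simpa using hdvd
  · exact le_inf le_sup_left (zpowers_le.mpr (Subgroup.pow_mem _ (mem_zpowers x) _))


theorem count : Nat.card (Subgroup G) = (n - 1) * (p + 1) + 2 := by
  have hn3 := S.hn
  have hfin : Finite G := S.finiteG
  classical
  let f : (Fin n ⊕ (Fin (n-1) × Fin p) ⊕ Unit) → Subgroup G := fun i =>
    match i with
    | Sum.inl k => zpowers (x ^ p ^ (k : ℕ))
    | Sum.inr (Sum.inl (k, t)) =>
        zpowers (x ^ p ^ ((k : ℕ) + 1)) ⊔ zpowers (x ^ ((t : ℕ) * p ^ (k : ℕ)) * y)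
    | Sum.inr (Sum.inr _) => ⊤
  have hNle : ∀ k : ℕ, zpowers (x ^ p ^ k) ≤ zpowers x :=
    fun k => zpowers_le.mpr (Subgroup.pow_mem _ (mem_zpowers x) _)
  have hdvd_c : ∀ (k t : ℕ), p ^ ((k+1)-1) ∣ t * p ^ k := fun k t => dvd_mul_left _ _
  have hxB : ∀ (k t : ℕ), k + 1 ≤ n-1 →
      x ∉ zpowers (x ^ p ^ (k+1)) ⊔ zpowers (x ^ (t * p ^ k) * y) := by
    intro k t hk hmem
    have hinf := S.B_inf (k := k+1) (c := t * p ^ k) (by omega) hk (hdvd_c k t)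
    have hx2 : x ∈ zpowers (x ^ p ^ (k+1)) := by
      rw [← hinf]
      exact ⟨hmem, mem_zpowers x⟩
    have hx3 : x ^ (1:ℕ) ∈ zpowers (x ^ p ^ (k+1)) := by simpa using hx2
    have := (S.hmemn 1 (k := k+1) hk).mp hx3
    have hgt : 1 < p ^ (k+1) := Nat.one_lt_pow (by omega) S.hp1
    have := Nat.le_of_dvd one_pos this
    omega
  have hBcard : ∀ (k : ℕ), k + 1 ≤ n - 1 → Nat.card (zpowers (x ^ p ^ (k+1) : G)) = p ^ (n-1-(k+1)) :=
    fun k hk => S.hcard_zp hk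
  have hinj : Function.Injective f := by
    have hBneN : ∀ (k1 k2 t2 : ℕ), zpowers (x ^ p ^ k1) ≠
        zpowers (x ^ p ^ (k2+1)) ⊔ zpowers (x ^ (t2 * p ^ k2) * y) := by
      intro k1 k2 t2 heq
      have hw : x ^ (t2 * p ^ k2) * y ∈ zpowers (x ^ p ^ k1) := by
        rw [heq]
        exact SetLike.le_def.mp le_sup_right (mem_zpowers _)
      exact S.hwnotN _ (hNle _ hw)
    have hNneTop : ∀ k1 : ℕ, zpowers (x ^ p ^ k1) ≠ (⊤ : Subgroup G) := by
      intro k1 heq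
      have hy2 : y ∈ zpowers (x ^ p ^ k1) := by rw [heq]; trivial
      exact S.hyN (hNle _ hy2)
    have hBneTop : ∀ (k t : ℕ), k + 1 ≤ n - 1 →
        zpowers (x ^ p ^ (k+1)) ⊔ zpowers (x ^ (t * p ^ k) * y) ≠ (⊤ : Subgroup G) := by
      intro k t hk heq
      have hx2 : x ∈ zpowers (x ^ p ^ (k+1)) ⊔ zpowers (x ^ (t * p ^ k) * y) := by
        rw [heq]; trivial
      exact hxB k t hk hx2
    rintro (k1 | ⟨k1, t1⟩ | u1) (k2 | ⟨k2, t2⟩ | u2) heq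
    · replace heq : zpowers (x ^ p ^ (k1:ℕ)) = zpowers (x ^ p ^ (k2:ℕ)) := heq
      have hl1 := k1.isLt
      have hl2 := k2.isLt
      have hceq : Nat.card (zpowers (x ^ p ^ (k1:ℕ))) = Nat.card (zpowers (x ^ p ^ (k2:ℕ))) := by
        rw [heq]
      rw [S.hcard_zp (by omega), S.hcard_zp (by omega)] at hceq
      have h2 := Nat.pow_right_injective S.hp1 hceq
      exact congrArg Sum.inl (Fin.ext (by omega))
    · exact absurd heq (hBneN _ _ _)
    · exact absurd heq (hNneTop _)
    · exact absurd heq.symm (hBneN _ _ _)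
    · -- the hard case
      have hl1 := k1.isLt
      have hl2 := k2.isLt
      have ht1 := t1.isLt
      have ht2 := t2.isLt
      replace heq : zpowers (x ^ p ^ ((k1:ℕ)+1)) ⊔ zpowers (x ^ ((t1:ℕ) * p ^ (k1:ℕ)) * y)
          = zpowers (x ^ p ^ ((k2:ℕ)+1)) ⊔ zpowers (x ^ ((t2:ℕ) * p ^ (k2:ℕ)) * y) := heq
      have hinf1 := S.B_inf (k := (k1:ℕ)+1) (c := (t1:ℕ) * p ^ (k1:ℕ)) (by omega) (by omega)
        (hdvd_c _ _)
      have hinf2 := S.B_inf (k := (k2:ℕ)+1) (c := (t2:ℕ) * p ^ (k2:ℕ)) (by omega) (by omega)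
        (hdvd_c _ _)
      have h1 : zpowers (x ^ p ^ ((k1:ℕ)+1)) = zpowers (x ^ p ^ ((k2:ℕ)+1)) := by
        rw [← hinf1, ← hinf2, heq]
      have hceq : Nat.card (zpowers (x ^ p ^ ((k1:ℕ)+1)))
          = Nat.card (zpowers (x ^ p ^ ((k2:ℕ)+1))) := by rw [h1]
      rw [S.hcard_zp (by omega), S.hcard_zp (by omega)] at hceq
      have hkk : (k1:ℕ) = (k2:ℕ) := by
        have h2 := Nat.pow_right_injective S.hp1 hceq
        omega
      have hw2 : x ^ ((t2:ℕ) * p ^ (k2:ℕ)) * y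
          ∈ zpowers (x ^ p ^ ((k1:ℕ)+1)) ⊔ zpowers (x ^ ((t1:ℕ) * p ^ (k1:ℕ)) * y) := by
        rw [heq]
        exact SetLike.le_def.mp le_sup_right (mem_zpowers _)
      obtain ⟨j, b, hbp, habeq, hdvd⟩ := S.memB (by omega) (by omega) (hdvd_c _ _) hw2
      have hb1 : b = 1 := by
        rcases b with _ | b'
        · exfalso
          apply S.hyN
          simp only [pow_zero, mul_one] at habeq
          have h3 : y = (x ^ ((t2:ℕ) * p ^ (k2:ℕ)))⁻¹ * x ^ j := by
            rw [← habeq]; group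
          rw [h3]
          exact mul_mem (inv_mem (Subgroup.pow_mem _ (mem_zpowers x) _))
            (zpow_mem (mem_zpowers x) j)
        · have h5 : x ^ ((t2:ℕ) * p ^ (k2:ℕ)) = x ^ j * y ^ b' := by
            apply mul_right_cancel (b := y)
            rw [habeq, pow_succ, mul_assoc]
          have h3 : y ^ b' ∈ zpowers x := by
            have h4 : y ^ b' = (x ^ j)⁻¹ * x ^ ((t2:ℕ) * p ^ (k2:ℕ)) := by rw [h5]; group
            rw [h4]
            exact mul_mem (inv_mem (zpow_mem (mem_zpowers x) j))
              (Subgroup.pow_mem _ (mem_zpowers x) _)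
          have := S.hyZ' (by omega) h3
          omega
      subst hb1
      have h5 : x ^ ((t2:ℕ) * p ^ (k2:ℕ)) = x ^ j := by
        apply mul_right_cancel (b := y)
        rw [habeq, pow_one]
      have h6 : x ^ ((((t2:ℕ) * p ^ (k2:ℕ) : ℕ)) : ℤ) = x ^ j := by
        rw [zpow_natCast]; exact h5
      have h7 : ((p:ℤ) ^ (n-1)) ∣ ((((t2:ℕ) * p ^ (k2:ℕ) : ℕ)) : ℤ) - j := by
        have h8 : x ^ (((((t2:ℕ) * p ^ (k2:ℕ) : ℕ)) : ℤ) - j) = 1 := by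
          rw [zpow_sub, h6]; simp
        have h9 := orderOf_dvd_iff_zpow_eq_one.mpr h8
        rwa [S.hx, Nat.cast_pow] at h9
      have h10 : ((p:ℤ) ^ ((k1:ℕ)+1)) ∣ ((((t2:ℕ) * p ^ (k2:ℕ) : ℕ)) : ℤ) - j :=
        dvd_trans (pow_dvd_pow _ (by omega)) h7
      have h11 : ((p:ℤ) ^ ((k1:ℕ)+1)) ∣ j - ((((t1:ℕ) * p ^ (k1:ℕ) : ℕ)) : ℤ) := by
        simpa using hdvd
      have h12 := dvd_add h10 h11
      have h13 : ((((t2:ℕ) * p ^ (k2:ℕ) : ℕ)) : ℤ) - j + (j - ((((t1:ℕ) * p ^ (k1:ℕ) : ℕ)) : ℤ))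
          = ((((t2:ℕ) * p ^ (k2:ℕ) : ℕ)) : ℤ) - ((((t1:ℕ) * p ^ (k1:ℕ) : ℕ)) : ℤ) := by ring
      rw [h13] at h12
      rw [← hkk] at h12
      have h14 : ((((t2:ℕ) * p ^ (k1:ℕ) : ℕ)) : ℤ) - ((((t1:ℕ) * p ^ (k1:ℕ) : ℕ)) : ℤ)
          = ((p:ℤ) ^ (k1:ℕ)) * (((t2:ℕ):ℤ) - ((t1:ℕ):ℤ)) := by push_cast; ring
      rw [h14, pow_succ] at h12
      have hne : ((p:ℤ)) ^ (k1:ℕ) ≠ 0 := pow_ne_zero _ (by exact_mod_cast S.hp.pos.ne')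
      have h15 : (p:ℤ) ∣ (((t2:ℕ):ℤ) - ((t1:ℕ):ℤ)) := (mul_dvd_mul_iff_left hne).mp h12
      have h16 : (((t2:ℕ):ℤ) - ((t1:ℕ):ℤ)) = 0 := by
        apply Int.eq_zero_of_abs_lt_dvd h15
        rw [abs_lt]
        constructor <;> omega
      have hteq : (t1:ℕ) = (t2:ℕ) := by omega
      exact congrArg Sum.inr (congrArg Sum.inl (Prod.ext (Fin.ext hkk) (Fin.ext hteq)))
    · exact absurd heq (hBneTop _ _ (by have := k1.isLt; omega))
    · exact absurd heq.symm (hNneTop _)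
    · exact absurd heq.symm (hBneTop _ _ (by have := k2.isLt; omega))
    · rfl
  have hsurjf : Function.Surjective f := by
    intro H
    by_cases hHN : H ≤ zpowers x
    · obtain ⟨k, hk, hHk⟩ := S.hNcyc hHN
      exact ⟨Sum.inl ⟨k, by omega⟩, hHk.symm⟩
    · have hex : ∃ c0 : ℕ, x ^ c0 * y ∈ H := by
        rw [SetLike.le_def] at hHN
        push_neg at hHN
        obtain ⟨g, hgH, hgN⟩ := hHN
        obtain ⟨a, b, hbp, rfl⟩ := S.hsurj g
        have hb0 : b ≠ 0 := by
          rintro rfl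
          exact hgN (by simpa using Subgroup.pow_mem _ (mem_zpowers x) a)
        have hcop : Nat.Coprime b p := Nat.Coprime.symm
          (S.hp.coprime_iff_not_dvd.mpr (Nat.not_dvd_of_pos_of_lt (by omega) hbp))
        obtain ⟨m, -, hm⟩ := Nat.exists_mul_mod_eq_one_of_coprime hcop S.hp1
        obtain ⟨s, hs⟩ := S.hpowgen a b m
        refine ⟨s, ?_⟩
        have hmemH : (x ^ a * y ^ b) ^ m ∈ H := Subgroup.pow_mem _ hgH m
        rw [hs] at hmemH
        have hym : y ^ (b * m) = y := by
          conv_lhs => rw [← Nat.div_add_mod (b*m) p]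
          rw [pow_add, pow_mul, S.hy, one_pow, one_mul, hm, pow_one]
        rwa [hym] at hmemH
      obtain ⟨c0, hc0⟩ := hex
      by_cases hxH : x ∈ H
      · refine ⟨Sum.inr (Sum.inr ()), ?_⟩
        have hyH : y ∈ H := by
          have h2 : y = (x ^ c0)⁻¹ * (x ^ c0 * y) := by group
          rw [h2]
          exact mul_mem (inv_mem (Subgroup.pow_mem _ hxH c0)) hc0
        have htop : (⊤ : Subgroup G) ≤ H := by
          rw [← S.hgen]
          refine (Subgroup.closure_le _).mpr ?_
          intro g hg
          simp only [Set.mem_insert_iff, Set.mem_singleton_iff] at hg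
          rcases hg with h | h
          · rw [h]; exact hxH
          · rw [h]; exact hyH
        exact le_antisymm htop le_top
      · obtain ⟨k, hk, hK⟩ := S.hNcyc (inf_le_right : H ⊓ zpowers x ≤ zpowers x)
        have hk1 : 1 ≤ k := by
          by_contra h0
          apply hxH
          have hxK : x ∈ zpowers (x ^ p ^ k) := by
            rw [show k = 0 by omega]
            simpa using mem_zpowers x
          rw [← hK] at hxK
          exact hxK.1
        have hwpeq : (x ^ c0 * y) ^ p = x ^ (c0 * (p + p ^ (n-2) * p.choose 2)) := by
          rw [S.hpow c0 p, S.hy, mul_one]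
          congr 1
          ring
        have hwp : x ^ (c0 * (p + p ^ (n-2) * p.choose 2)) ∈ zpowers (x ^ p ^ k) := by
          rw [← hK]
          exact ⟨hwpeq ▸ Subgroup.pow_mem _ hc0 p, Subgroup.pow_mem _ (mem_zpowers x) _⟩
        have hdvd := (S.hmemn _ hk).mp hwp
        obtain ⟨u, hDu, hpu⟩ := S.hD
        have hdvd2 : p ^ (k-1) ∣ c0 := by
          rw [hDu] at hdvd
          have h1 : p ^ (k-1) * p ∣ (c0 * u) * p := by
            rw [show p ^ (k-1) * p = p ^ k by rw [← pow_succ]; congr 1; omega,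
              show c0 * u * p = c0 * (p * u) by ring]
            exact hdvd
          have h2 : p ^ (k-1) ∣ c0 * u := (Nat.mul_dvd_mul_iff_right S.hp.pos).mp h1
          exact Nat.Coprime.dvd_of_dvd_mul_right
            (Nat.Coprime.pow_left _ (S.hp.coprime_iff_not_dvd.mpr hpu)) h2
        obtain ⟨c1, hc1⟩ := hdvd2
        refine ⟨Sum.inr (Sum.inl (⟨k-1, by omega⟩, ⟨c1 % p, Nat.mod_lt _ S.hp.pos⟩)), ?_⟩
        show zpowers (x ^ p ^ ((k-1) + 1)) ⊔ zpowers (x ^ ((c1 % p) * p ^ (k-1)) * y) = H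
        rw [show k - 1 + 1 = k by omega]
        obtain ⟨e, he⟩ : p ∣ c1 - c1 % p := Nat.dvd_sub_mod c1
        have hIZ : (c1 : ℤ) - ((c1 % p : ℕ) : ℤ) = (p : ℤ) * (e : ℤ) := by
          rw [← Nat.cast_sub (Nat.mod_le c1 p), he]
          push_cast
          ring
        have hdvdZ : ((p:ℤ)) ^ k ∣ (((c1 % p) * p ^ (k-1) : ℕ) : ℤ) - ((c0 : ℕ) : ℤ) := by
          have h8 : (((c1 % p) * p ^ (k-1) : ℕ) : ℤ) - ((c0 : ℕ) : ℤ)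
              = -(((p:ℤ) ^ (k-1)) * ((c1 : ℤ) - ((c1 % p : ℕ) : ℤ))) := by
            rw [hc1]
            push_cast
            ring
          rw [h8, hIZ]
          rw [show ((p:ℤ)) ^ k = (p:ℤ) ^ (k-1) * p by rw [← pow_succ]; congr 1; omega]
          exact dvd_neg.mpr ⟨e, by ring⟩
        have hdvdZ2 : ((p:ℤ)) ^ k ∣ ((c0 : ℕ) : ℤ) - (((c1 % p) * p ^ (k-1) : ℕ) : ℤ) := by
          rw [show ((c0 : ℕ) : ℤ) - (((c1 % p) * p ^ (k-1) : ℕ) : ℤ)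
            = -((((c1 % p) * p ^ (k-1) : ℕ) : ℤ) - ((c0 : ℕ) : ℤ)) by ring]
          exact dvd_neg.mpr hdvdZ
        have hKH : zpowers (x ^ p ^ k) ≤ H := by
          rw [← hK]
          exact inf_le_left
        have hwH : x ^ ((c1 % p) * p ^ (k-1)) * y ∈ H := by
          have h5 : x ^ ((((c1 % p) * p ^ (k-1) : ℕ) : ℤ) - ((c0:ℕ):ℤ)) ∈ zpowers (x ^ p ^ k) := by
            rw [S.hmemz _ hk]
            exact hdvdZ
          have h6 : x ^ ((c1 % p) * p ^ (k-1)) * y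
              = x ^ ((((c1 % p) * p ^ (k-1) : ℕ) : ℤ) - ((c0:ℕ):ℤ)) * (x ^ c0 * y) := by
            rw [← mul_assoc]
            congr 1
            rw [zpow_sub, zpow_natCast, zpow_natCast, inv_mul_cancel_right]
          rw [h6]
          exact mul_mem (hKH h5) hc0
        apply le_antisymm
        · exact sup_le hKH (zpowers_le.mpr hwH)
        · intro h hh
          obtain ⟨α, β, hβp, rfl⟩ := S.hsurj h
          have hwinB : x ^ c0 * y ∈ zpowers (x ^ p ^ k) ⊔ zpowers (x ^ ((c1 % p) * p ^ (k-1)) * y) := by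
            have h5 : x ^ (((c0:ℕ):ℤ) - (((c1 % p) * p ^ (k-1) : ℕ) : ℤ)) ∈ zpowers (x ^ p ^ k) := by
              rw [S.hmemz _ hk]
              exact hdvdZ2
            have h6 : x ^ c0 * y
                = x ^ (((c0:ℕ):ℤ) - (((c1 % p) * p ^ (k-1) : ℕ) : ℤ))
                  * (x ^ ((c1 % p) * p ^ (k-1)) * y) := by
              rw [← mul_assoc]
              congr 1
              rw [zpow_sub, zpow_natCast, zpow_natCast, inv_mul_cancel_right]
            rw [h6]
            exact mul_mem (SetLike.le_def.mp le_sup_left h5)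
              (SetLike.le_def.mp le_sup_right (mem_zpowers _))
          have hsplit : x ^ α * y ^ β
              = (x ^ α * y ^ β * ((x ^ c0 * y) ^ β)⁻¹) * (x ^ c0 * y) ^ β := by group
          rw [hsplit]
          apply mul_mem
          · have hKel : x ^ α * y ^ β * ((x ^ c0 * y) ^ β)⁻¹ ∈ H ⊓ zpowers x := by
              refine ⟨H.mul_mem hh (H.inv_mem (Subgroup.pow_mem H hc0 β)), ?_⟩
              rw [S.hpow c0 β]
              have h7 : x ^ α * y ^ β * (x ^ (c0 * β + p ^ (n-2) * c0 * β.choose 2) * y ^ β)⁻¹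
                  = x ^ α * (x ^ (c0 * β + p ^ (n-2) * c0 * β.choose 2))⁻¹ := by group
              rw [h7]
              exact Subgroup.mul_mem _ (Subgroup.pow_mem _ (mem_zpowers x) _)
                (Subgroup.inv_mem _ (Subgroup.pow_mem _ (mem_zpowers x) _))
            rw [hK] at hKel
            exact SetLike.le_def.mp le_sup_left hKel
          · exact Subgroup.pow_mem _ hwinB β
  have hcard := Nat.card_eq_of_bijective f ⟨hinj, hsurjf⟩
  rw [← hcard]
  simp only [Nat.card_eq_fintype_card, Fintype.card_sum, Fintype.card_prod, Fintype.card_fin,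
    Fintype.card_unit]
  obtain ⟨m, rfl⟩ : ∃ m, n = m + 3 := ⟨n - 3, by omega⟩
  have e1 : m + 3 - 1 = m + 2 := by omega
  rw [e1]
  ring

end MGHyp

end MGAux

/-- Any group of order `p^n` (with `n ≥ 4` if `p = 2` and `n ≥ 3` if `p` is odd)
generated by elements `x, y` with `x` of order `p^(n-1)`, `y^p = 1` and
`y x y⁻¹ = x^(p^(n-2)+1)` (i.e. a copy of the modular group `M_{p^n}`) has
exactly `(n-1)(p+1) + 2` subgroups. -/
theorem modularGroup_numSubgroups (p n : ℕ) (hp : p.Prime)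
    (hn : 3 ≤ n) (hn2 : p = 2 → 4 ≤ n)
    (G : Type) [Group G] (x y : G)
    (hcard : Nat.card G = p ^ n)
    (hx : orderOf x = p ^ (n - 1))
    (hy : y ^ p = 1)
    (hconj : y * x * y⁻¹ = x ^ (p ^ (n - 2) + 1))
    (hgen : Subgroup.closure {x, y} = ⊤) :
    numSubgroups G = (n - 1) * (p + 1) + 2 := by
  have S : MGHyp p n G x y := ⟨hp, hn, hn2, hcard, hx, hy, hconj, hgen⟩
  exact S.count
end

section
/- Let S = C_p^r ⋊ C_q be a Schmidt group with C_q acting faithfully on C_p^r, where p, q are distinct primes and r is the multiplicative order of p modulo q. Then S has no subgroup of order p^i·q for any 1 ≤ i < r. -/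
open Pointwise

open MulAction


lemma schmidt_aux_card_modEq_fixed {Q V : Type*} [Group Q] [Finite Q] [Group V] [Finite V]
    (q : ℕ) (hq : q.Prime) (hcard : Nat.card Q = q) (phi : Q →* MulAut V) :
    ∃ F : Subgroup V, (∀ v, v ∈ F ↔ ∀ c : Q, phi c v = v) ∧
      Nat.card V ≡ Nat.card F [MOD q] := by
  haveI : Fact q.Prime := ⟨hq⟩
  letI act : MulAction Q V := MulAction.compHom V phi
  have hsmul : ∀ (c : Q) (v : V), c • v = phi c v := fun c v => rfl
  have hPQ : IsPGroup q Q := IsPGroup.of_card (by rw [hcard, pow_one])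
  have hmod := hPQ.card_modEq_card_fixedPoints V
  refine ⟨{ carrier := fixedPoints Q V
            one_mem' := fun c => by rw [hsmul, map_one]
            mul_mem' := by
              intro a b ha hb c
              rw [hsmul, map_mul, ← hsmul c a, ← hsmul c b, ha c, hb c]
            inv_mem' := by
              intro a ha c
              rw [hsmul, map_inv, ← hsmul c a, ha c] }, fun v => Iff.rfl, hmod⟩

/-- Let `S = C_p^r ⋊ C_q` be a semidirect product where the cyclic group of prime
order `q` acts faithfully on the elementary abelian group `C_p^r`, `p` a prime
distinct from `q`, and `r` the multiplicative order of `p` modulo `q`. Then `S`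
has no subgroup of order `p^i * q` for any `1 ≤ i < r`. -/
theorem schmidt_no_subgroup_of_order (p q r : ℕ) (hp : p.Prime) (hq : q.Prime)
    (hpq : p ≠ q) (hr : r = orderOf (p : ZMod q))
    (phi : Multiplicative (ZMod q) →* MulAut (Fin r → Multiplicative (ZMod p)))
    (hphi : Function.Injective phi)
    (i : ℕ) (hi : 1 ≤ i) (hir : i < r) :
    ∀ H : Subgroup ((Fin r → Multiplicative (ZMod p)) ⋊[phi] Multiplicative (ZMod q)),
      Nat.card H ≠ p ^ i * q := by
  intro H hH
  haveI : Fact p.Prime := ⟨hp⟩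
  haveI : Fact q.Prime := ⟨hq⟩
  haveI : NeZero p := ⟨hp.pos.ne'⟩
  haveI : NeZero q := ⟨hq.pos.ne'⟩
  set V := Fin r → Multiplicative (ZMod p) with hV
  set Q := Multiplicative (ZMod q) with hQ
  set S := V ⋊[phi] Q with hS
  haveI : Finite S :=
    Finite.of_equiv (V × Q)
      ⟨fun x => ⟨x.1, x.2⟩, fun s => (s.left, s.right), fun x => rfl, fun s => rfl⟩
  have hcardQ : Nat.card Q = q := by
    simp [hQ, Nat.card_eq_fintype_card, ZMod.card]
  have hcardV : Nat.card V = p ^ r := by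
    simp [hV, Nat.card_eq_fintype_card, ZMod.card]
  have hr0 : 0 < r := lt_trans (Nat.lt_of_lt_of_le Nat.zero_lt_one hi) hir
  -- an element of order q in H
  obtain ⟨x, hx⟩ : ∃ x : H, orderOf x = q :=
    exists_prime_orderOf_dvd_card' q (by rw [hH]; exact ⟨p ^ i, mul_comm _ _⟩)
  have hxS : orderOf (x : S) = q := by rw [Subgroup.orderOf_coe, hx]
  set b : Q := (x : S).right with hb
  -- b ≠ 1
  have hb1 : b ≠ 1 := by
    intro h1
    have hxe : (x : S) = SemidirectProduct.inl (x : S).left := by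
      rw [← SemidirectProduct.inl_left_mul_inr_right (x : S), ← hb, h1]
      simp
    have hxp : (x : S) ^ p = 1 := by
      rw [hxe, ← map_pow]
      have hl : ((x : S).left) ^ p = 1 := by
        funext j
        have hc : Fintype.card (Multiplicative (ZMod p)) = p := by
          simp [ZMod.card]
        have h5 := pow_card_eq_one (x := (x : S).left j)
        rw [hc] at h5
        exact h5
      rw [hl, map_one]
    have : q ∣ p := hxS ▸ orderOf_dvd_of_pow_eq_one hxp
    exact hpq ((Nat.prime_dvd_prime_iff_eq hq hp).mp this).symm
  -- W = preimage of H in V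
  set W : Subgroup V := H.comap (SemidirectProduct.inl : V →* S) with hW
  -- conjugation invariance of W
  have hconj : ∀ w : V, w ∈ W ↔ phi b w ∈ W := by
    intro w
    have key : ∀ v : V, (x : S) * SemidirectProduct.inl v * (x : S)⁻¹
        = SemidirectProduct.inl (phi b v) := by
      intro v
      ext <;>
        simp [SemidirectProduct.mul_left, SemidirectProduct.mul_right,
          SemidirectProduct.inv_left, SemidirectProduct.inv_right,
          mul_comm, mul_assoc, mul_left_comm] <;> rfl
    constructor
    · intro hw
      have : (x : S) * SemidirectProduct.inl w * (x : S)⁻¹ ∈ H :=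
        H.mul_mem (H.mul_mem x.2 hw) (H.inv_mem x.2)
      rw [key w] at this
      exact Subgroup.mem_comap.mpr this
    · intro hw
      have h2 : SemidirectProduct.inl (phi b w) ∈ H := Subgroup.mem_comap.mp hw
      have h3 : (x : S)⁻¹ * ((x : S) * SemidirectProduct.inl w * (x : S)⁻¹) * (x : S) ∈ H := by
        rw [key w]
        exact H.mul_mem (H.mul_mem (H.inv_mem x.2) h2) x.2
      have h4 : (x : S)⁻¹ * ((x : S) * SemidirectProduct.inl w * (x : S)⁻¹) * (x : S)
          = SemidirectProduct.inl w := by group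
      rw [h4] at h3
      exact Subgroup.mem_comap.mpr h3
  -- |W| = p ^ i
  have hWdvd : Nat.card W ∣ p ^ r := hcardV ▸ Subgroup.card_subgroup_dvd_card W
  have hWcard : Nat.card W = p ^ i := by
    set f : H →* Q := SemidirectProduct.rightHom.comp H.subtype with hf
    have hcardsplit : Nat.card H = Nat.card (H ⧸ f.ker) * Nat.card f.ker :=
      Subgroup.card_eq_card_quotient_mul_card_subgroup f.ker
    have hquot : Nat.card (H ⧸ f.ker) = Nat.card f.range :=
      Nat.card_congr (QuotientGroup.quotientKerEquivRange f).toEquiv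
    have hkerW : Nat.card f.ker = Nat.card W := by
      refine Nat.card_congr ⟨fun k => ⟨(k.1 : S).left, ?_⟩, fun w =>
        ⟨⟨SemidirectProduct.inl w.1, ?_⟩, ?_⟩, ?_, ?_⟩
      · have h1 : (k.1 : S).right = 1 := k.2
        have : (k.1 : S) = SemidirectProduct.inl (k.1 : S).left := by
          rw [← SemidirectProduct.inl_left_mul_inr_right (k.1 : S), h1]
          simp
        exact Subgroup.mem_comap.mpr (this ▸ k.1.2)
      · exact Subgroup.mem_comap.mp w.2
      · exact MonoidHom.mem_ker.mpr (SemidirectProduct.rightHom_inl (φ := phi) w.1)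
      · intro k
        ext
        · have h1 : (k.1.1 : S).right = 1 := k.2
          conv_rhs => rw [← SemidirectProduct.inl_left_mul_inr_right (k.1.1 : S), h1]
          simp
        · have h1 : (k.1.1 : S).right = 1 := k.2
          simp [h1]
      · intro w
        rfl
    have hrange : Nat.card f.range ∣ q :=
      dvd_trans (Subgroup.card_subgroup_dvd_card f.range) (dvd_of_eq hcardQ)
    rcases (Nat.Prime.eq_one_or_self_of_dvd hq _ hrange) with h1 | h1
    · exfalso
      have hWeq : p ^ i * q = Nat.card W := by
        rw [← hH, hcardsplit, hquot, hkerW, h1, one_mul]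
      rw [← hWeq] at hWdvd
      have h3 : q ∣ p ^ r := dvd_trans (dvd_mul_left q (p ^ i)) hWdvd
      have h4 : q ∣ p := hq.dvd_of_dvd_pow h3
      exact hpq ((Nat.prime_dvd_prime_iff_eq hq hp).mp h4).symm
    · have heq : p ^ i * q = q * Nat.card W := by
        rw [← hH, hcardsplit, hquot, hkerW, h1]
      have h2 : q * Nat.card W = q * p ^ i := by rw [← heq, mul_comm]
      exact Nat.eq_of_mul_eq_mul_left hq.pos h2
  -- b generates Q
  have horderb : orderOf b = q := by
    have h1 : orderOf b ∣ q := dvd_trans (orderOf_dvd_natCard b) (dvd_of_eq hcardQ)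
    rcases (Nat.Prime.eq_one_or_self_of_dvd hq _ h1) with h2 | h2
    · exact absurd (orderOf_eq_one_iff.mp h2) hb1
    · exact h2
  have hzb : Subgroup.zpowers b = ⊤ := by
    apply Subgroup.eq_top_of_card_eq
    rw [Nat.card_zpowers, horderb, hcardQ]
  -- W is invariant under phi c for every c
  have hinv : ∀ (c : Q) (w : V), w ∈ W → phi c w ∈ W := by
    have hbSt : phi b ∈ MulAction.stabilizer (MulAut V) W := by
      rw [MulAction.mem_stabilizer_iff]
      ext v
      rw [Subgroup.mem_pointwise_smul_iff_inv_smul_mem]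
      have : (phi b)⁻¹ • v = phi b⁻¹ v := by rw [map_inv]; rfl
      rw [this]
      constructor
      · intro hv
        have := (hconj (phi b⁻¹ v)).mp hv
        rwa [← MulAut.mul_apply, ← map_mul, mul_inv_cancel, map_one, MulAut.one_apply] at this
      · intro hv
        exact (hconj (phi b⁻¹ v)).mpr (by
          rwa [← MulAut.mul_apply, ← map_mul, mul_inv_cancel, map_one, MulAut.one_apply])
    intro c w hw
    obtain ⟨k, hk⟩ : c ∈ Subgroup.zpowers b := hzb ▸ Subgroup.mem_top c
    have hcSt : phi c ∈ MulAction.stabilizer (MulAut V) W := by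
      rw [← hk, map_zpow]
      exact Subgroup.zpow_mem _ hbSt k
    have := MulAction.mem_stabilizer_iff.mp hcSt
    have h2 : phi c • w ∈ phi c • W := Subgroup.smul_mem_pointwise_smul w (phi c) W hw
    rwa [this] at h2
  -- the action of Q on W
  let phiW : Q →* MulAut W :=
    { toFun := fun c =>
        { toFun := fun w => ⟨phi c w.1, hinv c w.1 w.2⟩
          invFun := fun w => ⟨phi c⁻¹ w.1, hinv c⁻¹ w.1 w.2⟩
          left_inv := fun w => Subtype.ext (by
            show phi c⁻¹ (phi c w.1) = w.1
            rw [← MulAut.mul_apply, ← map_mul, inv_mul_cancel, map_one, MulAut.one_apply])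
          right_inv := fun w => Subtype.ext (by
            show phi c (phi c⁻¹ w.1) = w.1
            rw [← MulAut.mul_apply, ← map_mul, mul_inv_cancel, map_one, MulAut.one_apply])
          map_mul' := fun u v => Subtype.ext (map_mul (phi c) u.1 v.1) }
      map_one' := MulEquiv.ext fun w => Subtype.ext (by
        show phi 1 w.1 = w.1
        rw [map_one, MulAut.one_apply])
      map_mul' := fun c d => MulEquiv.ext fun w => Subtype.ext (by
        show phi (c * d) w.1 = phi c (phi d w.1)
        rw [map_mul, MulAut.mul_apply]) }
  have hphiW : ∀ (c : Q) (w : W), ((phiW c w : W) : V) = phi c (w : V) := fun c w => rfl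
  -- fixed points of the action on V
  obtain ⟨FV, hFVmem, hFVmod⟩ := schmidt_aux_card_modEq_fixed q hq hcardQ phi
  obtain ⟨FW, hFWmem, hFWmod⟩ := schmidt_aux_card_modEq_fixed q hq hcardQ phiW
  -- |FV| = p ^ m
  obtain ⟨m, hm, hFVcard⟩ := (Nat.dvd_prime_pow hp).mp
    (hcardV ▸ Subgroup.card_subgroup_dvd_card FV)
  have hmod1 : p ^ r ≡ p ^ m [MOD q] := by rwa [hcardV, hFVcard] at hFVmod
  have hmod2 : p ^ (r - m) ≡ 1 [MOD q] := by
    have hco : Nat.Coprime q (p ^ m) :=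
      ((Nat.coprime_primes hq hp).mpr (Ne.symm hpq)).pow_right m
    apply Nat.ModEq.cancel_left_of_coprime hco
    calc p ^ m * p ^ (r - m) = p ^ r := by
          rw [← pow_add, Nat.add_sub_cancel' hm]
      _ ≡ p ^ m [MOD q] := hmod1
      _ = p ^ m * 1 := (mul_one _).symm
  have hdvd_rm : r ∣ r - m := by
    have h1 : ((p : ZMod q)) ^ (r - m) = 1 := by
      have := (ZMod.natCast_eq_natCast_iff _ _ _).mpr hmod2
      push_cast at this
      exact this
    have h2 := orderOf_dvd_of_pow_eq_one h1
    rwa [← hr] at h2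
  -- m = 0, i.e. FV is trivial
  have hm0 : m = 0 := by
    rcases Nat.eq_zero_or_pos (r - m) with h0 | hpos
    · -- m = r : contradiction with faithfulness
      exfalso
      have hmr : m = r := by omega
      have hFVtop : FV = ⊤ := Subgroup.eq_top_of_card_eq _ (by rw [hFVcard, hcardV, hmr])
      have : phi b = phi 1 := by
        rw [map_one]
        refine MulEquiv.ext fun v => ?_
        exact ((hFVmem v).mp (hFVtop ▸ Subgroup.mem_top v)) b
      exact hb1 (hphi this)
    · have h1 := Nat.le_of_dvd hpos hdvd_rm
      omega
  have hFVbot : FV = ⊥ := Subgroup.card_eq_one.mp (by rw [hFVcard, hm0, pow_zero])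
  -- FW is trivial
  have hFWcard : Nat.card FW = 1 := by
    rw [Subgroup.card_eq_one]
    rw [Subgroup.eq_bot_iff_forall]
    intro w hw
    have h1 : (w : V) ∈ FV := (hFVmem (w : V)).mpr (fun c => by
      have := congrArg (Subtype.val) (((hFWmem w).mp hw) c)
      rwa [hphiW] at this)
    have h2 : (w : V) = 1 := by rwa [hFVbot, Subgroup.mem_bot] at h1
    exact Subtype.ext h2
  -- final contradiction
  have hfin : p ^ i ≡ 1 [MOD q] := by rwa [hWcard, hFWcard] at hFWmod
  have h1 : ((p : ZMod q)) ^ i = 1 := by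
    have := (ZMod.natCast_eq_natCast_iff _ _ _).mpr hfin
    push_cast at this
    exact this
  have h2 : r ∣ i := hr ▸ orderOf_dvd_of_pow_eq_one h1
  have h3 : r ≤ i := Nat.le_of_dvd (by omega) h2
  omega
end
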